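/- arXiv:2512.02744 — 12 statements merged into one kernel-verified Lean document; each statement's English description precedes it below -/
import Mathlib

section
/- Let f : ℝ^K → ℝ be differentiable and concave, let P be a symmetric positive-definite K×K matrix, and let θ₀ ∈ ℝ^K. Suppose θ* maximizes θ ↦ f(θ) − (1/2)(θ−θ₀)ᵀP(θ−θ₀) over ℝ^K. Then ⟨θ* − θ₀, ∇f(θ₀)⟩ ≥ 0. -/
open Matrix
open scoped RealInnerProductSpace

noncomputable section

/-! Since the penalty is nonnegative and vanishes at `θ₀`, comparing the maximiser with `θ₀`
gives `f θ₀ ≤ f θ*`. Concavity puts `f` below its tangent plane at `θ₀`, so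
`f θ* - f θ₀ ≤ ⟪θ* - θ₀, ∇f θ₀⟫`. -/

theorem ConcaveOn.le_add_fderiv {E : Type*} [NormedAddCommGroup E] [NormedSpace ℝ E]
    {s : Set E} {f : E → ℝ} (hf : ConcaveOn ℝ s f) {x y : E} (hx : x ∈ s) (hy : y ∈ s)
    (hfx : DifferentiableAt ℝ f x) :
    f y ≤ f x + fderiv ℝ f x (y - x) := by
  let L : ℝ →ᵃ[ℝ] E := AffineMap.lineMap x y
  have hL : HasDerivAt (f ∘ L) (fderiv ℝ f x (y - x)) 0 := by
    have hfL : DifferentiableAt ℝ f (L 0) := by simpa [L] using hfx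
    simpa [L] using hfL.hasFDerivAt.comp_hasDerivAt 0 AffineMap.hasDerivAt_lineMap
  have hslope := (hf.comp_affineMap L).slope_le_of_hasDerivAt (x := 0) (y := 1)
    (by simpa [L] using hx) (by simpa [L] using hy) one_pos hL
  simp only [slope_def_field, Function.comp_apply, L, AffineMap.lineMap_apply_zero,
    AffineMap.lineMap_apply_one, sub_zero, div_one] at hslope
  linarith

theorem real_inner_gradient_right {F : Type*} [NormedAddCommGroup F] [InnerProductSpace ℝ F]
    [CompleteSpace F] (f : F → ℝ) (x v : F) : ⟪v, gradient f x⟫ = fderiv ℝ f x v := by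
  rw [real_inner_comm, ← InnerProductSpace.toDual_apply_apply, toDual_gradient]

theorem stmt0 {K : ℕ} (f : EuclideanSpace ℝ (Fin K) → ℝ)
    (hdiff : Differentiable ℝ f) (hconc : ConcaveOn ℝ Set.univ f)
    (P : Matrix (Fin K) (Fin K) ℝ) (hP : P.PosDef)
    (θ₀ θs : EuclideanSpace ℝ (Fin K))
    (hmax : ∀ θ : EuclideanSpace ℝ (Fin K),
      f θ - (1/2) * ((θ - θ₀) ⬝ᵥ P.mulVec (θ - θ₀)) ≤
        f θs - (1/2) * ((θs - θ₀) ⬝ᵥ P.mulVec (θs - θ₀))) :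
    0 ≤ ⟪θs - θ₀, gradient f θ₀⟫ := by
  have hpenalty : 0 ≤ (θs - θ₀) ⬝ᵥ P.mulVec (θs - θ₀) := by
    simpa using hP.posSemidef.dotProduct_mulVec_nonneg (θs - θ₀)
  have hgain : f θ₀ ≤ f θs := by
    have := hmax θ₀
    simp only [sub_self, WithLp.ofLp_zero, mulVec_zero, dotProduct_zero, mul_zero] at this
    linarith
  have htangent := hconc.le_add_fderiv (Set.mem_univ θ₀) (Set.mem_univ θs) (hdiff θ₀)
  rw [real_inner_gradient_right]
  linarith
end
end

section
/- Let f : ℝ^K → ℝ be differentiable, and suppose there is α ≥ 0 such that θ ↦ f(θ) + (α/2)‖θ‖² is concave. Let P be symmetric positive definite with largest eigenvalue λmax(P), and suppose θ ↦ f(θ) − (1/2)(θ−θ₀)ᵀP(θ−θ₀) is strictly concave with maximizer θ_im. Define the explicit update θ_ex := θ₀ + P⁻¹∇f(θ₀). Then (θ_im−θ₀)ᵀP(θ_im−θ₀) ≤ (λmax(P)/(λmax(P)+α))² · (θ_ex−θ₀)ᵀP(θ_ex−θ₀). -/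
open Matrix

noncomputable section

/-- The gradient of `f`, viewed as a plain vector in `Fin K → ℝ`. -/
def gradV {K : ℕ} (f : EuclideanSpace ℝ (Fin K) → ℝ) (x : EuclideanSpace ℝ (Fin K)) :
    Fin K → ℝ := (gradient f x : EuclideanSpace ℝ (Fin K))

/-!
Write `u = θ_im - θ₀` and `v = θ_ex - θ₀`, so that `P v = ∇f(θ₀)`. Along the line through `θ₀` and
`θ_im` the first-order condition gives `∇f(θ_im)·u = uᵀPu`, while concavity of `f + α/2 ‖·‖²` makes
`∇f` strongly monotone: `∇f(θ_im)·u + α‖u‖² ≤ ∇f(θ₀)·u = uᵀPv`. Since `uᵀPu ≤ λmax ‖u‖²`, this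
gives `(1 + α/λmax) uᵀPu ≤ uᵀPv ≤ √(uᵀPu · vᵀPv)` by Cauchy–Schwarz for `P`, and squaring yields
the claim.
-/

open Set

section NormedSpace

variable {E : Type*} [NormedAddCommGroup E] [NormedSpace ℝ E]

theorem HasFDerivAt.hasDerivAt_comp_add_smul {g : E → ℝ} {g' : E →L[ℝ] ℝ} {x w : E} {t : ℝ}
    (hg : HasFDerivAt g g' (x + t • w)) :
    HasDerivAt (fun s : ℝ => g (x + s • w)) (g' w) t := by
  have hline : HasDerivAt (fun s : ℝ => x + s • w) w t := by
    simpa using ((hasDerivAt_id t).smul_const w).const_add x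
  exact hg.comp_hasDerivAt t hline

theorem ConcaveOn.hasFDerivAt_apply_sub_le {g : E → ℝ} {g' : E → E →L[ℝ] ℝ}
    (hg : ConcaveOn ℝ univ g) (hg' : ∀ z, HasFDerivAt g (g' z) z) (x y : E) :
    g' y (y - x) ≤ g' x (y - x) := by
  have hline : ConcaveOn ℝ univ (fun t : ℝ => g (x + t • (y - x))) := by
    simpa [Function.comp_def, AffineMap.lineMap_apply, add_comm] using
      hg.comp_affineMap (AffineMap.lineMap x y)
  have h0 : HasDerivAt (fun t : ℝ => g (x + t • (y - x))) (g' x (y - x)) 0 :=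
    HasFDerivAt.hasDerivAt_comp_add_smul (by simpa using hg' x)
  have h1 : HasDerivAt (fun t : ℝ => g (x + t • (y - x))) (g' y (y - x)) 1 :=
    HasFDerivAt.hasDerivAt_comp_add_smul (by simpa using hg' y)
  exact (hline.le_slope_of_hasDerivAt (mem_univ _) (mem_univ _) one_pos h1).trans
    (hline.slope_le_of_hasDerivAt (mem_univ _) (mem_univ _) one_pos h0)

theorem fderiv_apply_sub_eq_of_forall_sub_half_le {f q : E → ℝ}
    (hq : ∀ (t : ℝ) (w : E), q (t • w) = t ^ 2 * q w) {x y : E} (hf : DifferentiableAt ℝ f y)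
    (hmax : ∀ θ, f θ - 1 / 2 * q (θ - x) ≤ f y - 1 / 2 * q (y - x)) :
    fderiv ℝ f y (y - x) = q (y - x) := by
  set ψ : ℝ → ℝ := fun t => f (x + t • (y - x)) - 1 / 2 * (t ^ 2 * q (y - x))
  have hψ_max : IsLocalMax ψ 1 := Filter.Eventually.of_forall fun t => by
    simpa [ψ, hq] using hmax (x + t • (y - x))
  have hf_line : HasDerivAt (fun t : ℝ => f (x + t • (y - x))) (fderiv ℝ f y (y - x)) 1 :=
    HasFDerivAt.hasDerivAt_comp_add_smul (by simpa using hf.hasFDerivAt)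
  have hψ := hf_line.sub (((hasDerivAt_pow 2 (1 : ℝ)).mul_const (q (y - x))).const_mul (1 / 2))
  have hψ_zero := hψ_max.hasDerivAt_eq_zero hψ
  simp only [Nat.cast_ofNat, one_pow, mul_one] at hψ_zero
  linarith

end NormedSpace

theorem fderiv_apply_sub_add_le_of_concaveOn_add_sq_norm {F : Type*} [NormedAddCommGroup F]
    [InnerProductSpace ℝ F] {g : F → ℝ} {α : ℝ}
    (hg : ConcaveOn ℝ univ (fun θ => g θ + α / 2 * ‖θ‖ ^ 2)) (hd : Differentiable ℝ g) (x y : F) :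
    fderiv ℝ g y (y - x) + α * ‖y - x‖ ^ 2 ≤ fderiv ℝ g x (y - x) := by
  have key := hg.hasFDerivAt_apply_sub_le (fun z => (hd z).hasFDerivAt.add
    ((hasStrictFDerivAt_norm_sq z).hasFDerivAt.const_mul (α / 2))) x y
  have hnorm : ‖y - x‖ ^ 2 = inner ℝ y (y - x) - inner ℝ x (y - x) := by
    rw [← inner_sub_left, real_inner_self_eq_norm_sq]
  simp only [_root_.add_apply, _root_.smul_apply, coe_innerSL_apply,
    nsmul_eq_mul, Nat.cast_ofNat, smul_eq_mul] at key
  rw [hnorm]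
  linarith

namespace Matrix

variable {n : Type*} [Fintype n]

theorem smul_dotProduct_mulVec_smul {R : Type*} [CommRing R] (A : Matrix n n R) (t : R)
    (w : n → R) : (t • w) ⬝ᵥ A *ᵥ (t • w) = t ^ 2 * (w ⬝ᵥ A *ᵥ w) := by
  rw [mulVec_smul, smul_dotProduct, dotProduct_smul, smul_eq_mul, smul_eq_mul]
  ring

open scoped MatrixOrder Matrix.Norms.L2Operator in
theorem IsHermitian.dotProduct_mulVec_self_le [DecidableEq n] {A : Matrix n n ℝ}
    (hA : A.IsHermitian) {c : ℝ} (hc : ∀ i, hA.eigenvalues i ≤ c) (x : n → ℝ) :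
    x ⬝ᵥ A *ᵥ x ≤ c * (x ⬝ᵥ x) := by
  have hle : A ≤ algebraMap ℝ _ c := by
    rw [le_algebraMap_iff_spectrum_le hA.isSelfAdjoint, hA.spectrum_real_eq_range_eigenvalues]
    rintro _ ⟨i, rfl⟩
    exact hc i
  have h := (Matrix.le_iff.mp hle).dotProduct_mulVec_nonneg x
  rw [Algebra.algebraMap_eq_smul_one, sub_mulVec, smul_mulVec, one_mulVec, dotProduct_sub,
    dotProduct_smul, star_trivial, smul_eq_mul] at h
  linarith

theorem PosSemidef.dotProduct_mulVec_sq_le {A : Matrix n n ℝ} (hA : A.PosSemidef) (x y : n → ℝ) :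
    (x ⬝ᵥ A *ᵥ y) ^ 2 ≤ (x ⬝ᵥ A *ᵥ x) * (y ⬝ᵥ A *ᵥ y) := by
  let _ := A.toSeminormedAddCommGroup hA
  let _ := A.toInnerProductSpace hA
  have h_inner : ∀ u v : n → ℝ, (inner ℝ u v : ℝ) = u ⬝ᵥ A *ᵥ v := fun u v => by
    show (A *ᵥ v) ⬝ᵥ star u = _
    rw [star_trivial, dotProduct_comm]
  have h := real_inner_mul_inner_self_le x y
  rw [h_inner, h_inner, h_inner] at h
  rwa [sq]

end Matrix

theorem EuclideanSpace.dotProduct_self_eq_norm_sq {ι : Type*} [Fintype ι]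
    (x : EuclideanSpace ℝ ι) : x.ofLp ⬝ᵥ x.ofLp = ‖x‖ ^ 2 := by
  rw [← real_inner_self_eq_norm_sq, EuclideanSpace.inner_eq_star_dotProduct, star_trivial]

theorem fderiv_apply_eq_gradV_dotProduct {K : ℕ} (f : EuclideanSpace ℝ (Fin K) → ℝ)
    (x u : EuclideanSpace ℝ (Fin K)) : fderiv ℝ f x u = gradV f x ⬝ᵥ u := by
  rw [← InnerProductSpace.toDual_symm_apply, EuclideanSpace.inner_eq_star_dotProduct,
    star_trivial, dotProduct_comm]
  rfl

theorem le_div_add_sq_mul_of_sq_le_mul {l α q n s r : ℝ} (hl : 0 < l) (hα : 0 ≤ α)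
    (hq : 0 ≤ q) (hr : 0 ≤ r) (hqn : q ≤ l * n) (hs : q + α * n ≤ s) (hcs : s ^ 2 ≤ q * r) :
    q ≤ (l / (l + α)) ^ 2 * r := by
  have hql : q * (l + α) ≤ l * s := by nlinarith
  rw [div_pow, div_mul_eq_mul_div, le_div_iff₀ (by positivity)]
  rcases hq.eq_or_lt with rfl | hq
  · rw [zero_mul]; positivity
  refine le_of_mul_le_mul_left ?_ hq
  calc q * (q * (l + α) ^ 2) = (q * (l + α)) ^ 2 := by ring
    _ ≤ (l * s) ^ 2 := pow_le_pow_left₀ (by positivity) hql 2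
    _ = l ^ 2 * s ^ 2 := by ring
    _ ≤ q * (l ^ 2 * r) := by nlinarith

theorem stmt1_general {K : ℕ} (f : EuclideanSpace ℝ (Fin K) → ℝ)
    (hdiff : Differentiable ℝ f) (α : ℝ) (hα : 0 ≤ α)
    (hconc : ConcaveOn ℝ Set.univ (fun θ => f θ + α / 2 * ‖θ‖ ^ 2))
    (P : Matrix (Fin K) (Fin K) ℝ) (hP : P.PosDef)
    (lmax : ℝ) (hlmax : IsGreatest (Set.range hP.1.eigenvalues) lmax)
    (θ₀ θim θex : EuclideanSpace ℝ (Fin K))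
    (hmax : ∀ θ : EuclideanSpace ℝ (Fin K),
      f θ - (1/2) * ((θ - θ₀) ⬝ᵥ P.mulVec (θ - θ₀)) ≤
        f θim - (1/2) * ((θim - θ₀) ⬝ᵥ P.mulVec (θim - θ₀)))
    (hex : θex = θ₀ +
      (show EuclideanSpace ℝ (Fin K) from WithLp.toLp 2 ((P⁻¹).mulVec (gradV f θ₀)))) :
    (θim - θ₀) ⬝ᵥ P.mulVec (θim - θ₀) ≤
      (lmax / (lmax + α)) ^ 2 * ((θex - θ₀) ⬝ᵥ P.mulVec (θex - θ₀)) := by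
  set u := θim - θ₀
  set v := θex - θ₀ with hv_def
  show u.ofLp ⬝ᵥ P *ᵥ u.ofLp ≤ _ * (v.ofLp ⬝ᵥ P *ᵥ v.ofLp)
  have hlmax_pos : 0 < lmax := by
    obtain ⟨i, rfl⟩ := hlmax.1
    exact hP.eigenvalues_pos i
  have hPv : P *ᵥ v.ofLp = gradV f θ₀ := by
    have hv : v = WithLp.toLp 2 (P⁻¹ *ᵥ gradV f θ₀) := by
      rw [hv_def, hex]
      exact add_sub_cancel_left _ _
    rw [hv, WithLp.ofLp_toLp, mulVec_mulVec, mul_nonsing_inv _ (hP.isUnit.map detMonoidHom),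
      one_mulVec]
  have hfoc : fderiv ℝ f θim u = u.ofLp ⬝ᵥ P *ᵥ u.ofLp :=
    fderiv_apply_sub_eq_of_forall_sub_half_le (q := fun w => w.ofLp ⬝ᵥ P *ᵥ w.ofLp)
      (fun t w => by rw [WithLp.ofLp_smul, smul_dotProduct_mulVec_smul]) (hdiff θim) hmax
  have hmono := fderiv_apply_sub_add_le_of_concaveOn_add_sq_norm hconc hdiff θ₀ θim
  rw [hfoc, fderiv_apply_eq_gradV_dotProduct, dotProduct_comm (gradV f θ₀), ← hPv] at hmono
  have hray := hP.1.dotProduct_mulVec_self_le (fun i => hlmax.2 ⟨i, rfl⟩) u.ofLp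
  rw [EuclideanSpace.dotProduct_self_eq_norm_sq] at hray
  exact le_div_add_sq_mul_of_sq_le_mul hlmax_pos hα (hP.posSemidef.dotProduct_mulVec_nonneg _)
    (hP.posSemidef.dotProduct_mulVec_nonneg _) hray hmono
    (hP.posSemidef.dotProduct_mulVec_sq_le _ _)

theorem stmt1 {K : ℕ} (f : EuclideanSpace ℝ (Fin K) → ℝ)
    (hdiff : Differentiable ℝ f) (α : ℝ) (hα : 0 ≤ α)
    (hconc : ConcaveOn ℝ Set.univ (fun θ => f θ + α / 2 * ‖θ‖ ^ 2))
    (P : Matrix (Fin K) (Fin K) ℝ) (hP : P.PosDef)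
    (lmax : ℝ) (hlmax : IsGreatest (Set.range hP.1.eigenvalues) lmax)
    (θ₀ θim θex : EuclideanSpace ℝ (Fin K))
    (hstrict : StrictConcaveOn ℝ Set.univ
      (fun θ => f θ - (1/2) * ((θ - θ₀) ⬝ᵥ P.mulVec (θ - θ₀))))
    (hmax : ∀ θ : EuclideanSpace ℝ (Fin K),
      f θ - (1/2) * ((θ - θ₀) ⬝ᵥ P.mulVec (θ - θ₀)) ≤
        f θim - (1/2) * ((θim - θ₀) ⬝ᵥ P.mulVec (θim - θ₀)))
    (hex : θex = θ₀ +
      (show EuclideanSpace ℝ (Fin K) from WithLp.toLp 2 ((P⁻¹).mulVec (gradV f θ₀)))) :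
    (θim - θ₀) ⬝ᵥ P.mulVec (θim - θ₀) ≤
      (lmax / (lmax + α)) ^ 2 * ((θex - θ₀) ⬝ᵥ P.mulVec (θex - θ₀)) :=
  stmt1_general f hdiff α hα hconc P hP lmax hlmax θ₀ θim θex hmax hex
end
end

section
/- Let f : ℝ^K → ℝ be twice continuously differentiable with f(θ) + (α/2)‖θ‖² concave for some α ≥ 0, and let P be symmetric positive definite. For predictions θ₁, θ₂ ∈ ℝ^K, let θ₁', θ₂' be the respective maximizers of θ ↦ f(θ) − (1/2)(θ−θᵢ)ᵀP(θ−θᵢ), assumed to exist and be unique. Then (θ₁'−θ₂')ᵀP(θ₁'−θ₂') ≤ (λmax(P)/(λmax(P)+α))² · (θ₁−θ₂)ᵀP(θ₁−θ₂). -/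
/-! Write `Q v = vᵀ P v`. For a centre `c`, the objective `g θ = f θ - ½ Q (θ - c)` becomes concave
once `½ Q θ + α/2 ‖θ‖²` is added, because the quadratic parts of `Q (θ - c)` and `Q θ` cancel.
Comparing `g` at its maximizer `m` with `g` along segments from `m` then gives the quadratic growth
bound `g θ + ½ (Q (θ - m) + α ‖θ - m‖²) ≤ g m`. Adding the bounds for the two centres, evaluated at
each other's maximizer, cancels `f` and leaves `Q d + α ‖d‖² ≤ dᵀ P e` for `d = θ₁' - θ₂'` and
`e = θ₁ - θ₂`. As `Q d ≤ λmax ‖d‖²`, this gives `(λmax + α) Q d ≤ λmax dᵀ P e`, and the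
Cauchy–Schwarz inequality `(dᵀ P e)² ≤ Q d Q e` finishes the proof. -/

open Matrix Set Filter Topology
open LinearMap (BilinForm)

section BilinForm

variable {E : Type*} [AddCommGroup E] [Module ℝ E]

theorem LinearMap.BilinForm.apply_convexCombination_self (B : BilinForm ℝ E) (t : ℝ) (x y : E) :
    B (t • x + (1 - t) • y) (t • x + (1 - t) • y) =
      t * B x x + (1 - t) * B y y - t * (1 - t) * B (x - y) (x - y) := by
  simp only [map_add, map_sub, map_smul, LinearMap.add_apply, LinearMap.sub_apply,
    LinearMap.smul_apply, smul_eq_mul]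
  ring

theorem ConcaveOn.quadratic_growth_of_forall_le {g : E → ℝ} {R : BilinForm ℝ E} {m : E}
    (hconc : ConcaveOn ℝ univ fun x => g x + R x x) (hm : ∀ x, g x ≤ g m) (x : E) :
    g x + R (x - m) (x - m) ≤ g m := by
  -- concavity on the segment from `m` to `x`, divided by `t`; then let `t → 0`
  have hstep : ∀ t ∈ Ioc (0 : ℝ) 1, g x - g m + (1 - t) * R (x - m) (x - m) ≤ 0 := by
    rintro t ⟨ht₀, ht₁⟩
    have hseg := hconc.2 (mem_univ x) (mem_univ m) ht₀.le (sub_nonneg.2 ht₁) (add_sub_cancel t 1)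
    simp only [smul_eq_mul, R.apply_convexCombination_self] at hseg
    have hmax := hm (t • x + (1 - t) • m)
    refine nonpos_of_mul_nonpos_right ?_ ht₀
    linarith
  have hlim : Tendsto (fun t : ℝ => g x - g m + (1 - t) * R (x - m) (x - m)) (𝓝[>] 0)
      (𝓝 (g x - g m + (1 - 0) * R (x - m) (x - m))) :=
    ((continuous_const.sub continuous_id).mul continuous_const).const_add _ |>.tendsto 0
      |>.mono_left nhdsWithin_le_nhds
  have := le_of_tendsto hlim (eventually_of_mem (Ioc_mem_nhdsGT one_pos) hstep)
  linarith

theorem ConcaveOn.sub_bilin_sub_add {f : E → ℝ} {B S : BilinForm ℝ E}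
    (hconc : ConcaveOn ℝ univ fun x => f x + S x x) (c : E) :
    ConcaveOn ℝ univ fun x => f x - B (x - c) (x - c) + (B + S) x x := by
  have haffine : ConcaveOn ℝ univ fun x => (B.flip c + B c) x - B c c :=
    ((B.flip c + B c).concaveOn convex_univ).add (concaveOn_const _ convex_univ)
  refine (hconc.add haffine).congr fun x _ => ?_
  simp only [map_sub, LinearMap.sub_apply, LinearMap.add_apply, LinearMap.BilinForm.flip_apply,
    Pi.add_apply]
  ring

theorem ConcaveOn.prox_strongMonotone_bilin {f : E → ℝ} {B S : BilinForm ℝ E}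
    (hconc : ConcaveOn ℝ univ fun x => f x + S x x) {c₁ c₂ m₁ m₂ : E}
    (hm₁ : ∀ x, f x - B (x - c₁) (x - c₁) ≤ f m₁ - B (m₁ - c₁) (m₁ - c₁))
    (hm₂ : ∀ x, f x - B (x - c₂) (x - c₂) ≤ f m₂ - B (m₂ - c₂) (m₂ - c₂)) :
    2 * (B + S) (m₁ - m₂) (m₁ - m₂) ≤ B (m₁ - m₂) (c₁ - c₂) + B (c₁ - c₂) (m₁ - m₂) := by
  have h₁ := (hconc.sub_bilin_sub_add (B := B) c₁).quadratic_growth_of_forall_le hm₁ m₂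
  have h₂ := (hconc.sub_bilin_sub_add (B := B) c₂).quadratic_growth_of_forall_le hm₂ m₁
  simp only [map_sub, LinearMap.sub_apply, LinearMap.add_apply] at h₁ h₂ ⊢
  linarith

end BilinForm

section Matrix

variable {n : Type*} [Fintype n]

theorem Matrix.IsSymm.dotProduct_mulVec_comm {P : Matrix n n ℝ} (hP : P.IsSymm) (x y : n → ℝ) :
    x ⬝ᵥ P *ᵥ y = y ⬝ᵥ P *ᵥ x := by
  rw [dotProduct_mulVec, ← mulVec_transpose, hP.eq, dotProduct_comm]

theorem ConcaveOn.prox_strongMonotone_dotProduct [DecidableEq n] {f : EuclideanSpace ℝ n → ℝ}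
    {α : ℝ} (hconc : ConcaveOn ℝ univ fun θ => f θ + α / 2 * ‖θ‖ ^ 2)
    {P : Matrix n n ℝ} (hP : P.IsSymm) {c₁ c₂ m₁ m₂ : EuclideanSpace ℝ n}
    (hm₁ : ∀ θ : EuclideanSpace ℝ n, f θ - 1 / 2 * ((θ - c₁) ⬝ᵥ P *ᵥ (θ - c₁)) ≤
      f m₁ - 1 / 2 * ((m₁ - c₁) ⬝ᵥ P *ᵥ (m₁ - c₁)))
    (hm₂ : ∀ θ : EuclideanSpace ℝ n, f θ - 1 / 2 * ((θ - c₂) ⬝ᵥ P *ᵥ (θ - c₂)) ≤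
      f m₂ - 1 / 2 * ((m₂ - c₂) ⬝ᵥ P *ᵥ (m₂ - c₂))) :
    (m₁ - m₂) ⬝ᵥ P *ᵥ (m₁ - m₂) + α * ‖m₁ - m₂‖ ^ 2 ≤ (m₁ - m₂) ⬝ᵥ P *ᵥ (c₁ - c₂) := by
  let L : EuclideanSpace ℝ n →ₗ[ℝ] n → ℝ := (WithLp.linearEquiv 2 ℝ (n → ℝ)).toLinearMap
  let B : BilinForm ℝ (EuclideanSpace ℝ n) := (1 / 2 : ℝ) • (toBilin' P).compl₁₂ L L
  let S : BilinForm ℝ (EuclideanSpace ℝ n) := (α / 2) • innerₗ _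
  have hB (x y : EuclideanSpace ℝ n) : B x y = 1 / 2 * (x ⬝ᵥ P *ᵥ y) := by
    simp [B, L, toBilin'_apply']
  have hS (x : EuclideanSpace ℝ n) : S x x = α / 2 * ‖x‖ ^ 2 := by simp [S]
  have key := ConcaveOn.prox_strongMonotone_bilin (B := B) (S := S)
    (by simpa only [hS] using hconc)
    (by simpa only [hB, WithLp.ofLp_sub] using hm₁) (by simpa only [hB, WithLp.ofLp_sub] using hm₂)
  simp only [LinearMap.add_apply, hB, hS, WithLp.ofLp_sub] at key ⊢
  rw [hP.dotProduct_mulVec_comm (c₁.ofLp - c₂.ofLp)] at key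
  linarith

theorem EuclideanSpace.real_norm_sq_eq_dotProduct (x : EuclideanSpace ℝ n) :
    ‖x‖ ^ 2 = x.ofLp ⬝ᵥ x.ofLp := by
  rw [EuclideanSpace.real_norm_sq_eq, dotProduct]
  simp only [sq]

open scoped MatrixOrder in
theorem Matrix.IsHermitian.dotProduct_mulVec_le_mul_norm_sq [DecidableEq n] {P : Matrix n n ℝ}
    (hP : P.IsHermitian) {l : ℝ} (hl : ∀ i, hP.eigenvalues i ≤ l) (x : EuclideanSpace ℝ n) :
    x.ofLp ⬝ᵥ P *ᵥ x.ofLp ≤ l * ‖x‖ ^ 2 := by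
  have hle : P ≤ algebraMap ℝ _ l := by
    refine le_algebraMap_of_spectrum_le (fun r hr => ?_) hP.isSelfAdjoint
    rw [hP.spectrum_real_eq_range_eigenvalues] at hr
    obtain ⟨i, rfl⟩ := hr
    exact hl i
  have := (Matrix.le_iff.mp hle).dotProduct_mulVec_nonneg x.ofLp
  simpa [sub_mulVec, Algebra.algebraMap_eq_smul_one, smul_mulVec, dotProduct_sub,
    EuclideanSpace.real_norm_sq_eq_dotProduct] using this

theorem Matrix.PosSemidef.dotProduct_mulVec_sq_le_s2 {P : Matrix n n ℝ} (hP : P.PosSemidef)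
    (x y : n → ℝ) : (x ⬝ᵥ P *ᵥ y) ^ 2 ≤ (x ⬝ᵥ P *ᵥ x) * (y ⬝ᵥ P *ᵥ y) := by
  classical
  simpa only [toBilin'_apply'] using (toBilin' P).apply_sq_le_of_symm
    (fun v => by simpa only [toBilin'_apply', star_trivial] using hP.dotProduct_mulVec_nonneg v)
    (BilinForm.isSymm_iff.1 (isSymm_toBilin'_iff_isSymm.2 (isHermitian_iff_isSymm.1 hP.1))) x y

theorem Matrix.PosSemidef.dotProduct_mulVec_self_nonneg {P : Matrix n n ℝ} (hP : P.PosSemidef)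
    (x : n → ℝ) : 0 ≤ x ⬝ᵥ P *ᵥ x := by
  simpa only [star_trivial] using hP.dotProduct_mulVec_nonneg x

end Matrix

theorem le_div_sq_mul_of_mul_le_of_sq_le {a b x y z : ℝ} (ha : 0 < a) (hx : 0 ≤ x)
    (hy : 0 ≤ y) (h : a * x ≤ b * z) (hz : z ^ 2 ≤ x * y) : x ≤ (b / a) ^ 2 * y := by
  rw [div_pow, div_mul_eq_mul_div, le_div_iff₀ (by positivity)]
  rcases hx.eq_or_lt with rfl | hx
  · simp only [zero_mul]; positivity
  · have hsq : (a * x) ^ 2 ≤ (b * z) ^ 2 := pow_le_pow_left₀ (by positivity) h 2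
    nlinarith [mul_le_mul_of_nonneg_left hz (sq_nonneg b)]

theorem stmt2_general {K : ℕ} (f : EuclideanSpace ℝ (Fin K) → ℝ)
    (α : ℝ) (hα : 0 ≤ α)
    (hconc : ConcaveOn ℝ Set.univ (fun θ => f θ + α / 2 * ‖θ‖ ^ 2))
    (P : Matrix (Fin K) (Fin K) ℝ) (hP : P.PosDef)
    (lmax : ℝ) (hlmax : IsGreatest (Set.range hP.1.eigenvalues) lmax)
    (θ₁ θ₂ θ₁' θ₂' : EuclideanSpace ℝ (Fin K))
    (hmax₁ : ∀ θ : EuclideanSpace ℝ (Fin K),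
      f θ - (1/2) * ((θ - θ₁) ⬝ᵥ P.mulVec (θ - θ₁)) ≤
        f θ₁' - (1/2) * ((θ₁' - θ₁) ⬝ᵥ P.mulVec (θ₁' - θ₁)))
    (hmax₂ : ∀ θ : EuclideanSpace ℝ (Fin K),
      f θ - (1/2) * ((θ - θ₂) ⬝ᵥ P.mulVec (θ - θ₂)) ≤
        f θ₂' - (1/2) * ((θ₂' - θ₂) ⬝ᵥ P.mulVec (θ₂' - θ₂))) :
    (θ₁' - θ₂') ⬝ᵥ P.mulVec (θ₁' - θ₂') ≤
      (lmax / (lmax + α)) ^ 2 * ((θ₁ - θ₂) ⬝ᵥ P.mulVec (θ₁ - θ₂)) := by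
  obtain ⟨i, hi⟩ := hlmax.1
  have hl : 0 < lmax := hi ▸ hP.eigenvalues_pos i
  have hmono := hconc.prox_strongMonotone_dotProduct (isHermitian_iff_isSymm.1 hP.1) hmax₁ hmax₂
  have hray := hP.1.dotProduct_mulVec_le_mul_norm_sq (fun j => hlmax.2 ⟨j, rfl⟩) (θ₁' - θ₂')
  have hCS := hP.posSemidef.dotProduct_mulVec_sq_le_s2 (θ₁' - θ₂').ofLp (θ₁ - θ₂).ofLp
  simp only [WithLp.ofLp_sub] at hmono hray hCS ⊢
  refine le_div_sq_mul_of_mul_le_of_sq_le (by linarith)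
    (hP.posSemidef.dotProduct_mulVec_self_nonneg _) (hP.posSemidef.dotProduct_mulVec_self_nonneg _)
    ?_ hCS
  linarith [mul_le_mul_of_nonneg_left hray hα, mul_le_mul_of_nonneg_left hmono hl.le]

theorem stmt2 {K : ℕ} (f : EuclideanSpace ℝ (Fin K) → ℝ)
    (hf : ContDiff ℝ 2 f) (α : ℝ) (hα : 0 ≤ α)
    (hconc : ConcaveOn ℝ Set.univ (fun θ => f θ + α / 2 * ‖θ‖ ^ 2))
    (P : Matrix (Fin K) (Fin K) ℝ) (hP : P.PosDef)
    (lmax : ℝ) (hlmax : IsGreatest (Set.range hP.1.eigenvalues) lmax)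
    (θ₁ θ₂ θ₁' θ₂' : EuclideanSpace ℝ (Fin K))
    (hmax₁ : ∀ θ : EuclideanSpace ℝ (Fin K),
      f θ - (1/2) * ((θ - θ₁) ⬝ᵥ P.mulVec (θ - θ₁)) ≤
        f θ₁' - (1/2) * ((θ₁' - θ₁) ⬝ᵥ P.mulVec (θ₁' - θ₁)))
    (huniq₁ : ∀ θ : EuclideanSpace ℝ (Fin K),
      (∀ θ' : EuclideanSpace ℝ (Fin K),
        f θ' - (1/2) * ((θ' - θ₁) ⬝ᵥ P.mulVec (θ' - θ₁)) ≤
          f θ - (1/2) * ((θ - θ₁) ⬝ᵥ P.mulVec (θ - θ₁))) → θ = θ₁')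
    (hmax₂ : ∀ θ : EuclideanSpace ℝ (Fin K),
      f θ - (1/2) * ((θ - θ₂) ⬝ᵥ P.mulVec (θ - θ₂)) ≤
        f θ₂' - (1/2) * ((θ₂' - θ₂) ⬝ᵥ P.mulVec (θ₂' - θ₂)))
    (huniq₂ : ∀ θ : EuclideanSpace ℝ (Fin K),
      (∀ θ' : EuclideanSpace ℝ (Fin K),
        f θ' - (1/2) * ((θ' - θ₂) ⬝ᵥ P.mulVec (θ' - θ₂)) ≤
          f θ - (1/2) * ((θ - θ₂) ⬝ᵥ P.mulVec (θ - θ₂))) → θ = θ₂') :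
    (θ₁' - θ₂') ⬝ᵥ P.mulVec (θ₁' - θ₂') ≤
      (lmax / (lmax + α)) ^ 2 * ((θ₁ - θ₂) ⬝ᵥ P.mulVec (θ₁ - θ₂)) :=
  stmt2_general f α hα hconc P hP lmax hlmax θ₁ θ₂ θ₁' θ₂' hmax₁ hmax₂
end

section
/- Let f : ℝ^K → ℝ be twice continuously differentiable with gradient ∇f that is L-Lipschitz, and suppose f(θ) + (α/2)‖θ‖² is concave for some α ≥ 0. Let P be symmetric positive definite with λmin(P) ≥ L/2. For θ₁, θ₂ ∈ ℝ^K define the explicit updates θᵢ' = θᵢ + P⁻¹∇f(θᵢ). Then (θ₁'−θ₂')ᵀP(θ₁'−θ₂') ≤ [(λmax(P) − α(2 − L/λmin(P)))/λmax(P)] · (θ₁−θ₂)ᵀP(θ₁−θ₂), and the coefficient (λmax(P) − α(2 − L/λmin(P)))/λmax(P) lies in [0,1]. -/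
/-
Write `d = θ₁ - θ₂` and `δ = ∇f θ₁ - ∇f θ₂`. Since `P` is symmetric, the `P`-norm of the
difference of the updates expands as `dᵀPd + 2⟪d, δ⟫ + δᵀP⁻¹δ`. Concavity of `f + α/2‖·‖²` gives
strong monotonicity `⟪d, δ⟫ ≤ -α‖d‖²`, and concavity of `f` with an `L`-Lipschitz gradient gives
the Baillon–Haddad cocoercivity `‖δ‖² ≤ -L⟪d, δ⟫`. With `δᵀP⁻¹δ ≤ ‖δ‖²/λmin` the cross terms
add up to at most `(2 - L/λmin)⟪d, δ⟫ ≤ -α(2 - L/λmin)‖d‖²`, which is nonpositive because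
`λmin ≥ L/2`, and `‖d‖² ≥ dᵀPd/λmax` finishes. The factor is at most `1` for the same reason, and
at least `0` because `α ≤ L` and `L(2 - L/λmin) ≤ λmin`.
-/

open Matrix

noncomputable section

open Set AffineMap
open scoped Gradient RealInnerProductSpace NNReal MatrixOrder

section FirstOrder

variable {E : Type*} [NormedAddCommGroup E] [NormedSpace ℝ E] {f : E → ℝ} {f' g' : E →L[ℝ] ℝ}
  {x y z : E} {s : Set E}

lemma HasFDerivAt.hasDerivAt_comp_lineMap {t : ℝ} (hf : HasFDerivAt f f' (lineMap y z t)) :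
    HasDerivAt (f ∘ lineMap y z) (f' (z - y)) t :=
  hf.comp_hasDerivAt t hasDerivAt_lineMap

lemma ConcaveOn.le_add_of_hasFDerivAt (hf : ConcaveOn ℝ s f) (hy : y ∈ s) (hz : z ∈ s)
    (hfy : HasFDerivAt f f' y) : f z ≤ f y + f' (z - y) := by
  have hline : ConcaveOn ℝ (lineMap y z ⁻¹' s) (f ∘ lineMap y z) :=
    hf.comp_affineMap (lineMap y z)
  have hslope := hline.slope_le_of_hasDerivAt (x := 0) (y := 1) (by simpa using hy)
    (by simpa using hz) zero_lt_one (HasFDerivAt.hasDerivAt_comp_lineMap (by simpa using hfy))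
  simp only [slope_def_field, Function.comp_apply, lineMap_apply_zero, lineMap_apply_one,
    sub_zero, div_one] at hslope
  linarith

lemma ConcaveOn.apply_sub_nonpos_of_hasFDerivAt (hf : ConcaveOn ℝ s f) (hx : x ∈ s)
    (hy : y ∈ s) (hfx : HasFDerivAt f f' x) (hfy : HasFDerivAt f g' y) :
    (f' - g') (x - y) ≤ 0 := by
  have hxy := hf.le_add_of_hasFDerivAt hx hy hfx
  have hyx := hf.le_add_of_hasFDerivAt hy hx hfy
  rw [← neg_sub x y, map_neg] at hxy
  simp only [_root_.sub_apply]
  linarith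

end FirstOrder

section Gradient

variable {F : Type*} [NormedAddCommGroup F] [InnerProductSpace ℝ F] [CompleteSpace F]
  {f : F → ℝ} {x y : F} {s : Set F} {K : ℝ≥0}

lemma StrongConcaveOn.inner_gradient_sub_le {m : ℝ} (hf : StrongConcaveOn s m f) (hx : x ∈ s)
    (hy : y ∈ s) (hfx : DifferentiableAt ℝ f x) (hfy : DifferentiableAt ℝ f y) :
    ⟪∇ f x - ∇ f y, x - y⟫ ≤ -m * ‖x - y‖ ^ 2 := by
  have hderiv : ∀ {w}, DifferentiableAt ℝ f w → HasFDerivAt (fun w => f w + m / 2 * ‖w‖ ^ 2)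
      (fderiv ℝ f w + (m / 2) • (2 • innerSL ℝ w)) w := fun hw =>
    hw.hasFDerivAt.add ((hasStrictFDerivAt_norm_sq _).hasFDerivAt.const_mul (m / 2))
  have h := (strongConcaveOn_iff_convex.mp hf).apply_sub_nonpos_of_hasFDerivAt hx hy
    (hderiv hfx) (hderiv hfy)
  simp only [_root_.sub_apply, _root_.add_apply, _root_.smul_apply, smul_eq_mul, two_smul,
    innerSL_apply_apply, ← inner_gradient_left] at h
  rw [← real_inner_self_eq_norm_sq, inner_sub_left, inner_sub_left (x := x)]
  linarith

lemma add_inner_gradient_sub_le_of_lipschitzWith (hf : Differentiable ℝ f)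
    (hLip : LipschitzWith K (∇ f)) (y z : F) :
    f y + ⟪∇ f y, z - y⟫ - K / 2 * ‖z - y‖ ^ 2 ≤ f z := by
  set d := z - y
  set ψ : ℝ → ℝ := fun t => f (lineMap y z t) - t * ⟪∇ f y, d⟫ + K * ‖d‖ ^ 2 / 2 * t ^ 2
  have hψ : ∀ t, HasDerivAt ψ (⟪∇ f (lineMap y z t) - ∇ f y, d⟫ + K * ‖d‖ ^ 2 * t) t := by
    intro t
    have hline := ((hf _).hasFDerivAt.hasDerivAt_comp_lineMap (y := y) (z := z) (t := t))
    rw [← inner_gradient_left] at hline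
    refine ((hline.sub ((hasDerivAt_id t).mul_const ⟪∇ f y, d⟫)).add
      ((hasDerivAt_pow 2 t).const_mul (K * ‖d‖ ^ 2 / 2))).congr_deriv ?_
    rw [inner_sub_left]
    ring
  have hmono : MonotoneOn ψ (Ici 0) := by
    refine monotoneOn_of_hasDerivWithinAt_nonneg (convex_Ici 0)
      (fun t _ => (hψ t).continuousAt.continuousWithinAt) (fun t _ => (hψ t).hasDerivWithinAt) ?_
    intro t ht
    rw [interior_Ici] at ht
    have hdist : ‖∇ f (lineMap y z t) - ∇ f y‖ ≤ K * (t * ‖d‖) := by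
      have := hLip.norm_sub_le (lineMap y z t) y
      rwa [lineMap_apply, vsub_eq_sub, vadd_eq_add, add_sub_cancel_right, norm_smul,
        Real.norm_of_nonneg ht.out.le] at this
    have := (abs_le.mp ((abs_real_inner_le_norm _ d).trans
      (mul_le_mul_of_nonneg_right hdist (norm_nonneg d)))).1
    nlinarith
  have h01 := hmono (mem_Ici.mpr le_rfl) (mem_Ici.mpr zero_le_one) zero_le_one
  simp only [ψ, lineMap_apply_zero, lineMap_apply_one] at h01
  linarith

lemma ConcaveOn.add_sq_norm_sub_gradient_div_le (hconc : ConcaveOn ℝ univ f)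
    (hf : Differentiable ℝ f) (hLip : LipschitzWith K (∇ f)) (hK : K ≠ 0) (x y : F) :
    f y + ‖∇ f x - ∇ f y‖ ^ 2 / (2 * K) ≤ f x + ⟪∇ f x, y - x⟫ := by
  have hKpos : (0 : ℝ) < K := by positivity
  set u := ∇ f y - ∇ f x
  set z := y + (K : ℝ)⁻¹ • u
  have htangent : f z ≤ f x + ⟪∇ f x, z - x⟫ := by
    simpa only [inner_gradient_left] using
      hconc.le_add_of_hasFDerivAt (mem_univ x) (mem_univ z) (hf x).hasFDerivAt
  have hdescent := add_inner_gradient_sub_le_of_lipschitzWith hf hLip y z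
  have hzy : z - y = (K : ℝ)⁻¹ • u := add_sub_cancel_left y _
  have hzx : z - x = (y - x) + (K : ℝ)⁻¹ • u := by simp only [z]; abel
  rw [hzy, norm_smul, inner_smul_right, Real.norm_of_nonneg (by positivity)] at hdescent
  rw [hzx, inner_add_right, inner_smul_right] at htangent
  have hu : ⟪∇ f y, u⟫ - ⟪∇ f x, u⟫ = ‖u‖ ^ 2 := by
    rw [← inner_sub_left, real_inner_self_eq_norm_sq]
  have hu' : (K : ℝ)⁻¹ * ⟪∇ f y, u⟫ - (K : ℝ)⁻¹ * ⟪∇ f x, u⟫ = (K : ℝ)⁻¹ * ‖u‖ ^ 2 := by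
    rw [← mul_sub, hu]
  have hsq : ‖u‖ ^ 2 / (2 * K) = (K : ℝ)⁻¹ * ‖u‖ ^ 2 - K / 2 * ((K : ℝ)⁻¹ * ‖u‖) ^ 2 := by
    field_simp; ring
  rw [norm_sub_rev]
  change _ + ‖u‖ ^ 2 / _ ≤ _
  linarith

lemma ConcaveOn.sq_norm_sub_gradient_le (hconc : ConcaveOn ℝ univ f) (hf : Differentiable ℝ f)
    (hLip : LipschitzWith K (∇ f)) (x y : F) :
    ‖∇ f x - ∇ f y‖ ^ 2 ≤ K * -⟪∇ f x - ∇ f y, x - y⟫ := by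
  rcases eq_or_ne K 0 with rfl | hK
  · have : ∇ f x = ∇ f y := by simpa using hLip.dist_le_mul x y
    simp [this]
  have hxy := hconc.add_sq_norm_sub_gradient_div_le hf hLip hK x y
  have hyx := hconc.add_sq_norm_sub_gradient_div_le hf hLip hK y x
  rw [norm_sub_rev] at hyx
  have hKpos : (0 : ℝ) < K := by positivity
  have hsum : ‖∇ f x - ∇ f y‖ ^ 2 / K ≤ -⟪∇ f x - ∇ f y, x - y⟫ := by
    have : ⟪∇ f x, y - x⟫ + ⟪∇ f y, x - y⟫ = -⟪∇ f x - ∇ f y, x - y⟫ := by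
      rw [← neg_sub x y, inner_neg_right, inner_sub_left]; ring
    have : ‖∇ f x - ∇ f y‖ ^ 2 / K = 2 * (‖∇ f x - ∇ f y‖ ^ 2 / (2 * K)) := by field_simp
    linarith
  rwa [div_le_iff₀' hKpos] at hsum

lemma StrongConcaveOn.le_of_lipschitzWith_gradient [Nontrivial F] {m : ℝ}
    (hconc : StrongConcaveOn univ m f) (hf : Differentiable ℝ f) (hLip : LipschitzWith K (∇ f)) :
    m ≤ K := by
  obtain ⟨x, hx⟩ := exists_ne (0 : F)
  have hstrong := hconc.inner_gradient_sub_le (mem_univ x) (mem_univ 0) (hf x) (hf 0)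
  have hLx : ‖∇ f x - ∇ f 0‖ ≤ K * ‖x‖ := by simpa using hLip.norm_sub_le x 0
  have hCS := neg_le_of_abs_le (abs_real_inner_le_norm (∇ f x - ∇ f 0) x)
  rw [sub_zero] at hstrong
  have hxpos : 0 < ‖x‖ ^ 2 := by positivity
  nlinarith [mul_le_mul_of_nonneg_right hLx (norm_nonneg x)]

end Gradient

def contractionFactor (α L lmin lmax : ℝ) : ℝ := (lmax - α * (2 - L / lmin)) / lmax

lemma contractionFactor_mem_Icc {α L lmin lmax : ℝ} (hα : 0 ≤ α) (hαL : α ≤ L) (hlmin : 0 < lmin)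
    (hcap : L / 2 ≤ lmin) (hle : lmin ≤ lmax) : contractionFactor α L lmin lmax ∈ Set.Icc 0 1 := by
  have hlmax : 0 < lmax := hlmin.trans_le hle
  have hfac : 0 ≤ 2 - L / lmin := by rw [sub_nonneg, div_le_iff₀ hlmin]; linarith
  have hL : L * (2 - L / lmin) ≤ lmin := by
    have : L * (2 - L / lmin) = lmin - (lmin - L) ^ 2 / lmin := by field_simp; ring
    rw [this]
    linarith [div_nonneg (sq_nonneg (lmin - L)) hlmin.le]
  have hαfac : α * (2 - L / lmin) ≤ L * (2 - L / lmin) := mul_le_mul_of_nonneg_right hαL hfac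
  unfold contractionFactor
  constructor
  · exact div_nonneg (by linarith) hlmax.le
  · rw [div_le_one hlmax]
    nlinarith [mul_nonneg hα hfac]

namespace Matrix

variable {n : Type*} [Fintype n] [DecidableEq n]

lemma IsHermitian.mul_dotProduct_self_le_dotProduct_mulVec {A : Matrix n n ℝ} (hA : A.IsHermitian)
    {c : ℝ} (hc : ∀ i, c ≤ hA.eigenvalues i) (x : n → ℝ) : c * (x ⬝ᵥ x) ≤ x ⬝ᵥ A *ᵥ x := by
  have h : algebraMap ℝ (Matrix n n ℝ) c ≤ A := by
    rw [algebraMap_le_iff_le_spectrum hA.isSelfAdjoint, hA.spectrum_real_eq_range_eigenvalues]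
    rintro _ ⟨i, rfl⟩
    exact hc i
  simpa [sub_mulVec, Algebra.algebraMap_eq_smul_one, dotProduct_sub, smul_mulVec,
    dotProduct_smul] using (Matrix.le_iff.mp h).dotProduct_mulVec_nonneg x

lemma IsHermitian.dotProduct_mulVec_le_mul_dotProduct_self {A : Matrix n n ℝ} (hA : A.IsHermitian)
    {c : ℝ} (hc : ∀ i, hA.eigenvalues i ≤ c) (x : n → ℝ) : x ⬝ᵥ A *ᵥ x ≤ c * (x ⬝ᵥ x) := by
  have h : A ≤ algebraMap ℝ (Matrix n n ℝ) c := by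
    rw [le_algebraMap_iff_spectrum_le hA.isSelfAdjoint, hA.spectrum_real_eq_range_eigenvalues]
    rintro _ ⟨i, rfl⟩
    exact hc i
  simpa [sub_mulVec, Algebra.algebraMap_eq_smul_one, dotProduct_sub, smul_mulVec,
    dotProduct_smul] using (Matrix.le_iff.mp h).dotProduct_mulVec_nonneg x

lemma IsSymm.add_inv_mulVec_dotProduct_mulVec {R : Type*} [CommRing R] {P : Matrix n n R}
    (hP : P.IsSymm) (hdet : IsUnit P.det) (d v : n → R) :
    (d + P⁻¹ *ᵥ v) ⬝ᵥ P *ᵥ (d + P⁻¹ *ᵥ v) = d ⬝ᵥ P *ᵥ d + 2 * (d ⬝ᵥ v) + v ⬝ᵥ P⁻¹ *ᵥ v := by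
  have hinv : P *ᵥ (P⁻¹ *ᵥ v) = v := by rw [mulVec_mulVec, mul_nonsing_inv P hdet, one_mulVec]
  have hsymm : P⁻¹ *ᵥ v ⬝ᵥ P *ᵥ d = d ⬝ᵥ v := by
    rw [dotProduct_mulVec, ← mulVec_transpose, hP.eq, hinv, dotProduct_comm]
  rw [mulVec_add, hinv, add_dotProduct, dotProduct_add, dotProduct_add, hsymm,
    dotProduct_comm (P⁻¹ *ᵥ v) v]
  ring

lemma PosDef.mul_dotProduct_inv_mulVec_le {P : Matrix n n ℝ} (hP : P.PosDef) {c : ℝ} (hc₀ : 0 ≤ c)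
    (hc : ∀ i, c ≤ hP.1.eigenvalues i) (v : n → ℝ) : c * (v ⬝ᵥ P⁻¹ *ᵥ v) ≤ v ⬝ᵥ v := by
  set w := P⁻¹ *ᵥ v
  have hPw : P *ᵥ w = v := by
    rw [mulVec_mulVec, mul_nonsing_inv P hP.det_pos.ne'.isUnit, one_mulVec]
  have hlow := hP.1.mul_dotProduct_self_le_dotProduct_mulVec hc w
  rw [hPw, dotProduct_comm w v] at hlow
  -- expand `‖v - c • w‖² ≥ 0` and use `c‖w‖² ≤ wᵀPw = wᵀv`
  have hsq : 0 ≤ (v - c • w) ⬝ᵥ (v - c • w) := dotProduct_self_star_nonneg ..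
  simp only [sub_dotProduct, dotProduct_sub, smul_dotProduct, dotProduct_smul, smul_eq_mul,
    dotProduct_comm w v] at hsq
  nlinarith [mul_le_mul_of_nonneg_left hlow hc₀]

lemma PosDef.dotProduct_mulVec_add_inv_mulVec_le {P : Matrix n n ℝ} (hP : P.PosDef)
    {α L lmin lmax : ℝ} (hlmin : ∀ i, lmin ≤ hP.1.eigenvalues i)
    (hlmax : ∀ i, hP.1.eigenvalues i ≤ lmax) (hlmin_pos : 0 < lmin) (hle : lmin ≤ lmax)
    (hα : 0 ≤ α) (hcap : L / 2 ≤ lmin) {d v : n → ℝ} (hmono : d ⬝ᵥ v ≤ -α * (d ⬝ᵥ d))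
    (hcoco : v ⬝ᵥ v ≤ L * -(d ⬝ᵥ v)) :
    (d + P⁻¹ *ᵥ v) ⬝ᵥ P *ᵥ (d + P⁻¹ *ᵥ v) ≤ contractionFactor α L lmin lmax * (d ⬝ᵥ P *ᵥ d) := by
  have hlmax_pos : 0 < lmax := hlmin_pos.trans_le hle
  have hfac : 0 ≤ 2 - L / lmin := by rw [sub_nonneg, div_le_iff₀ hlmin_pos]; linarith
  have hinv : v ⬝ᵥ P⁻¹ *ᵥ v ≤ L / lmin * -(d ⬝ᵥ v) := by
    rw [div_mul_eq_mul_div, le_div_iff₀' hlmin_pos]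
    exact (hP.mul_dotProduct_inv_mulVec_le hlmin_pos.le hlmin v).trans hcoco
  have hQ := hP.1.dotProduct_mulVec_le_mul_dotProduct_self hlmax d
  rw [(isHermitian_iff_isSymm.mp hP.1).add_inv_mulVec_dotProduct_mulVec hP.det_pos.ne'.isUnit]
  calc d ⬝ᵥ P *ᵥ d + 2 * (d ⬝ᵥ v) + v ⬝ᵥ P⁻¹ *ᵥ v
      ≤ d ⬝ᵥ P *ᵥ d + (2 - L / lmin) * (d ⬝ᵥ v) := by linarith
    _ ≤ d ⬝ᵥ P *ᵥ d - α * (2 - L / lmin) * (d ⬝ᵥ d) := by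
        nlinarith [mul_le_mul_of_nonneg_left hmono hfac]
    _ ≤ d ⬝ᵥ P *ᵥ d - α * (2 - L / lmin) / lmax * (d ⬝ᵥ P *ᵥ d) := by
        have hA : 0 ≤ α * (2 - L / lmin) / lmax := by positivity
        have : α * (2 - L / lmin) / lmax * (lmax * (d ⬝ᵥ d)) = α * (2 - L / lmin) * (d ⬝ᵥ d) := by
          field_simp
        linarith [mul_le_mul_of_nonneg_left hQ hA]
    _ = contractionFactor α L lmin lmax * (d ⬝ᵥ P *ᵥ d) := by
        unfold contractionFactor
        field_simp

end Matrix

theorem stmt3 {K : ℕ} (f : EuclideanSpace ℝ (Fin K) → ℝ)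
    (hf : ContDiff ℝ 2 f) (L : ℝ) (hL : 0 ≤ L)
    (hLip : LipschitzWith (Real.toNNReal L) (fun θ => gradient f θ))
    (α : ℝ) (hα : 0 ≤ α)
    (hconc : ConcaveOn ℝ Set.univ (fun θ => f θ + α / 2 * ‖θ‖ ^ 2))
    (P : Matrix (Fin K) (Fin K) ℝ) (hP : P.PosDef)
    (lmin lmax : ℝ)
    (hlmin : IsLeast (Set.range hP.1.eigenvalues) lmin)
    (hlmax : IsGreatest (Set.range hP.1.eigenvalues) lmax)
    (hcap : L / 2 ≤ lmin)
    (θ₁ θ₂ θ₁' θ₂' : EuclideanSpace ℝ (Fin K))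
    (h₁ : θ₁' = θ₁ + (show EuclideanSpace ℝ (Fin K) from WithLp.toLp 2 ((P⁻¹).mulVec (gradV f θ₁))))
    (h₂ : θ₂' = θ₂ + (show EuclideanSpace ℝ (Fin K) from WithLp.toLp 2 ((P⁻¹).mulVec (gradV f θ₂)))) :
    (θ₁' - θ₂') ⬝ᵥ P.mulVec (θ₁' - θ₂') ≤
      ((lmax - α * (2 - L / lmin)) / lmax) * ((θ₁ - θ₂) ⬝ᵥ P.mulVec (θ₁ - θ₂)) ∧
    (lmax - α * (2 - L / lmin)) / lmax ∈ Set.Icc (0:ℝ) 1 := by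
  have hdf : Differentiable ℝ f := hf.differentiable (by norm_num)
  have hstrong : StrongConcaveOn univ α f := strongConcaveOn_iff_convex.mpr hconc
  have hLip' : LipschitzWith L.toNNReal (∇ f) := hLip
  obtain ⟨j, hj⟩ := hlmin.1
  have hlmin_pos : 0 < lmin := hj ▸ hP.eigenvalues_pos j
  have hle : lmin ≤ lmax := hlmax.2 hlmin.1
  have hαL : α ≤ L := by
    have : Nonempty (Fin K) := ⟨j⟩
    simpa [hL] using hstrong.le_of_lipschitzWith_gradient hdf hLip'
  refine ⟨?_, contractionFactor_mem_Icc hα hαL hlmin_pos hcap hle⟩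
  have hstep : θ₁'.ofLp - θ₂'.ofLp = θ₁.ofLp - θ₂.ofLp + P⁻¹ *ᵥ (∇ f θ₁ - ∇ f θ₂).ofLp := by
    subst h₁ h₂
    ext i
    simp [gradV, mulVec_sub]
    ring
  simp only [WithLp.ofLp_sub]
  rw [hstep]
  refine hP.dotProduct_mulVec_add_inv_mulVec_le (fun i => hlmin.2 ⟨i, rfl⟩)
    (fun i => hlmax.2 ⟨i, rfl⟩) hlmin_pos hle hα hcap ?_ ?_
  · have := hstrong.inner_gradient_sub_le (mem_univ θ₁) (mem_univ θ₂) (hdf _) (hdf _)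
    rwa [← real_inner_self_eq_norm_sq] at this
  · have hconcf : ConcaveOn ℝ univ f := strongConcaveOn_zero.mp (hstrong.mono hα)
    have := hconcf.sq_norm_sub_gradient_le hdf hLip' θ₁ θ₂
    rwa [← real_inner_self_eq_norm_sq, Real.coe_toNNReal L hL] at this
end
end

section
/- Let P and Φ be K×K real matrices with P symmetric positive definite and P − ΦᵀPΦ positive semidefinite. Then for all x ∈ ℝ^K, (Φx)ᵀP(Φx) ≤ [(λmax(P) − λmin(P − ΦᵀPΦ))/λmax(P)] · xᵀPx, and the coefficient (λmax(P) − λmin(P − ΦᵀPΦ))/λmax(P) lies in [0,1]. If P − ΦᵀPΦ is positive definite, the coefficient lies in [0,1). -/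
/-!
Both bounds are Rayleigh-quotient estimates: `P ≤ λmax(P) • 1` and
`λmin(P - ΦᵀPΦ) • 1 ≤ P - ΦᵀPΦ` in the Loewner order. With `q = xᵀPx` and `r = (Φx)ᵀP(Φx)`,
the second gives `r ≤ q - λmin ‖x‖²`, and the first turns `‖x‖²` into at least `q / λmax`.
-/

open Matrix
open scoped MatrixOrder

namespace Matrix

section Loewner

variable {n 𝕜 : Type*} [Fintype n] [DecidableEq n] [RCLike 𝕜] {A : Matrix n n 𝕜}

theorem IsHermitian.le_algebraMap_of_eigenvalues_le (hA : A.IsHermitian) {c : ℝ}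
    (h : ∀ i, hA.eigenvalues i ≤ c) : A ≤ algebraMap ℝ (Matrix n n 𝕜) c :=
  le_algebraMap_of_spectrum_le (by
    rw [hA.spectrum_real_eq_range_eigenvalues]
    rintro _ ⟨i, rfl⟩
    exact h i) hA

theorem IsHermitian.algebraMap_le_of_le_eigenvalues (hA : A.IsHermitian) {c : ℝ}
    (h : ∀ i, c ≤ hA.eigenvalues i) : algebraMap ℝ (Matrix n n 𝕜) c ≤ A :=
  algebraMap_le_of_le_spectrum (by
    rw [hA.spectrum_real_eq_range_eigenvalues]
    rintro _ ⟨i, rfl⟩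
    exact h i) hA

end Loewner

section QuadraticForm

variable {n : Type*} [Fintype n]

theorem dotProduct_mulVec_transpose_mul_mul {R : Type*} [CommSemiring R] (P Φ : Matrix n n R)
    (x : n → R) : x ⬝ᵥ (Φᵀ * P * Φ) *ᵥ x = (Φ *ᵥ x) ⬝ᵥ P *ᵥ (Φ *ᵥ x) := by
  rw [← mulVec_mulVec, dotProduct_mulVec, ← vecMul_vecMul, vecMul_transpose, ← dotProduct_mulVec]

theorem dotProduct_mulVec_le_of_le {A B : Matrix n n ℝ} (h : A ≤ B) (x : n → ℝ) :
    x ⬝ᵥ A *ᵥ x ≤ x ⬝ᵥ B *ᵥ x := by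
  simpa only [star_trivial, sub_mulVec, dotProduct_sub, sub_nonneg] using
    (le_iff.mp h).dotProduct_mulVec_nonneg x

variable [DecidableEq n]

theorem dotProduct_algebraMap_mulVec (c : ℝ) (x : n → ℝ) :
    x ⬝ᵥ algebraMap ℝ (Matrix n n ℝ) c *ᵥ x = c * (x ⬝ᵥ x) := by
  rw [Algebra.algebraMap_eq_smul_one, smul_mulVec, one_mulVec, dotProduct_smul, smul_eq_mul]

theorem IsHermitian.dotProduct_mulVec_le {A : Matrix n n ℝ} (hA : A.IsHermitian) {c : ℝ}
    (h : ∀ i, hA.eigenvalues i ≤ c) (x : n → ℝ) : x ⬝ᵥ A *ᵥ x ≤ c * (x ⬝ᵥ x) := by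
  simpa only [dotProduct_algebraMap_mulVec] using
    dotProduct_mulVec_le_of_le (hA.le_algebraMap_of_eigenvalues_le h) x

theorem IsHermitian.le_dotProduct_mulVec {A : Matrix n n ℝ} (hA : A.IsHermitian) {c : ℝ}
    (h : ∀ i, c ≤ hA.eigenvalues i) (x : n → ℝ) : c * (x ⬝ᵥ x) ≤ x ⬝ᵥ A *ᵥ x := by
  simpa only [dotProduct_algebraMap_mulVec] using
    dotProduct_mulVec_le_of_le (hA.algebraMap_le_of_le_eigenvalues h) x

end QuadraticForm

end Matrix

theorem stmt4 {K : ℕ} (P Φ : Matrix (Fin K) (Fin K) ℝ)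
    (hP : P.PosDef) (hPsd : (P - Φᵀ * P * Φ).PosSemidef)
    (lmax lmin : ℝ)
    (hlmax : IsGreatest (Set.range hP.1.eigenvalues) lmax)
    (hlmin : IsLeast (Set.range hPsd.1.eigenvalues) lmin) :
    (∀ x : Fin K → ℝ,
      (Φ.mulVec x) ⬝ᵥ P.mulVec (Φ.mulVec x) ≤
        ((lmax - lmin) / lmax) * (x ⬝ᵥ P.mulVec x)) ∧
    (lmax - lmin) / lmax ∈ Set.Icc (0:ℝ) 1 ∧
    ((P - Φᵀ * P * Φ).PosDef → (lmax - lmin) / lmax ∈ Set.Ico (0:ℝ) 1) := by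
  obtain ⟨i, hi⟩ := hlmax.1
  have hlmax_pos : 0 < lmax := hi ▸ hP.eigenvalues_pos i
  have hlmin_nonneg : 0 ≤ lmin := by
    obtain ⟨j, rfl⟩ := hlmin.1
    exact hPsd.eigenvalues_nonneg j
  have hupper (x : Fin K → ℝ) : x ⬝ᵥ P *ᵥ x ≤ lmax * (x ⬝ᵥ x) :=
    hP.1.dotProduct_mulVec_le (fun j ↦ hlmax.2 ⟨j, rfl⟩) x
  have hlower (x : Fin K → ℝ) :
      lmin * (x ⬝ᵥ x) ≤ x ⬝ᵥ P *ᵥ x - (Φ *ᵥ x) ⬝ᵥ P *ᵥ (Φ *ᵥ x) := by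
    rw [← dotProduct_mulVec_transpose_mul_mul, ← dotProduct_sub, ← sub_mulVec]
    exact hPsd.1.le_dotProduct_mulVec (fun j ↦ hlmin.2 ⟨j, rfl⟩) x
  have hlmin_le : lmin ≤ lmax := by
    set e : Fin K → ℝ := Pi.single i 1
    have he : e ⬝ᵥ e = 1 := by simp [e]
    have hr := hP.posSemidef.dotProduct_mulVec_nonneg (Φ *ᵥ e)
    rw [star_trivial] at hr
    have hq := hupper e
    have hqr := hlower e
    rw [he, mul_one] at hq hqr
    linarith
  refine ⟨fun x ↦ ?_, ⟨div_nonneg (by linarith) hlmax_pos.le,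
    (div_le_one hlmax_pos).mpr (by linarith)⟩, fun hpd ↦ ?_⟩
  · rw [div_mul_eq_mul_div, le_div_iff₀ hlmax_pos]
    linarith [mul_le_mul_of_nonneg_left (hupper x) hlmin_nonneg,
      mul_le_mul_of_nonneg_left (hlower x) hlmax_pos.le]
  · obtain ⟨j, hj⟩ := hlmin.1
    have hlmin_pos : 0 < lmin := hj ▸ hpd.eigenvalues_pos j
    exact ⟨div_nonneg (by linarith) hlmax_pos.le, (div_lt_one hlmax_pos).mpr (by linarith)⟩
end

section
/- Let ν > 0, σ > 0, and H > 0 with |Φ| < 1 − H(ν+1)/(8νσ²), where H(ν+1)/(8νσ²) < 1 is assumed. Suppose for each observation y_t the update map U_t : ℝ → ℝ sends a prediction μ to the unique solution m of m = μ + H·(ν+1)/(νσ²)·(y_t − m)/(1 + (y_t−m)²/(νσ²)) (uniqueness guaranteed by H⁻¹ > (ν+1)/(8νσ²)). Then the prediction-to-prediction map μ ↦ ω + Φ·U_t(μ) is a strict contraction on ℝ: there exists ρ < 1, namely ρ = |Φ|/(1 − H(ν+1)/(8νσ²)), with |ω + Φ·U_t(μ₁) − ω − Φ·U_t(μ₂)|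 ≤ ρ·|μ₁ − μ₂| for all μ₁, μ₂. -/
/-!
The update map solves `m = μ + c · ψ(y - m)` with `ψ(x) = x / (1 + x² / s)`. Although `ψ` is not
monotone, its derivative is bounded below by `-1/8` (attained at `x² = 3s`), so `x ↦ ψ x + x / 8`
is monotone. Subtracting the fixed-point equations for two predictions then shows that the update
expands distances by at most the factor `1 / (1 - c/8)`, which the prediction coefficient `|Φ|`
more than compensates.
-/

noncomputable def studentScore (s x : ℝ) : ℝ := x / (1 + x ^ 2 / s)

theorem monotone_studentScore_add {s : ℝ} (hs : 0 < s) :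
    Monotone fun x => studentScore s x + 8⁻¹ * x := by
  intro a b hab
  have ha : s + a ^ 2 ≠ 0 := by positivity
  have hb : s + b ^ 2 ≠ 0 := by positivity
  have key : studentScore s b + 8⁻¹ * b - (studentScore s a + 8⁻¹ * a) =
      (b - a) * ((3 * s - a * b) ^ 2 + s * (a - b) ^ 2) / (8 * (s + a ^ 2) * (s + b ^ 2)) := by
    unfold studentScore
    field_simp
    ring
  rw [← sub_nonneg, key]
  exact div_nonneg (mul_nonneg (sub_nonneg.2 hab) (by positivity)) (by positivity)

theorem one_sub_mul_abs_sub_le_of_implicit_update {g : ℝ → ℝ} {c L y μ₁ μ₂ u₁ u₂ : ℝ}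
    (hc : 0 ≤ c) (hg : Monotone fun x => g x + L * x)
    (h₁ : u₁ = μ₁ + c * g (y - u₁)) (h₂ : u₂ = μ₂ + c * g (y - u₂)) :
    (1 - c * L) * |u₁ - u₂| ≤ |μ₁ - μ₂| := by
  wlog hu : u₂ ≤ u₁ generalizing μ₁ μ₂ u₁ u₂
  · rw [abs_sub_comm, abs_sub_comm μ₁]
    exact this h₂ h₁ (le_of_not_ge hu)
  have hgap : c * (g (y - u₁) - g (y - u₂)) ≤ c * (L * (u₁ - u₂)) :=
    mul_le_mul_of_nonneg_left (by linarith [hg (show y - u₁ ≤ y - u₂ by linarith)]) hc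
  rw [abs_of_nonneg (sub_nonneg.2 hu)]
  calc (1 - c * L) * (u₁ - u₂) ≤ μ₁ - μ₂ := by linarith
    _ ≤ |μ₁ - μ₂| := le_abs_self _

theorem stmt10_general (ν σ H ω Φ : ℝ) (hν : 0 < ν) (hσ : 0 < σ) (hH : 0 < H)
    (hΦ : |Φ| < 1 - H * (ν + 1) / (8 * ν * σ ^ 2))
    (y : ℝ) (U : ℝ → ℝ)
    (hU : ∀ μ : ℝ, U μ = μ + H * ((ν + 1) / (ν * σ ^ 2)) *
      ((y - U μ) / (1 + (y - U μ) ^ 2 / (ν * σ ^ 2)))) :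
    |Φ| / (1 - H * (ν + 1) / (8 * ν * σ ^ 2)) < 1 ∧
    ∀ μ₁ μ₂ : ℝ,
      |(ω + Φ * U μ₁) - (ω + Φ * U μ₂)| ≤
        (|Φ| / (1 - H * (ν + 1) / (8 * ν * σ ^ 2))) * |μ₁ - μ₂| := by
  set k := H * (ν + 1) / (8 * ν * σ ^ 2)
  have hk : 0 < 1 - k := (abs_nonneg Φ).trans_lt hΦ
  have hck : H * ((ν + 1) / (ν * σ ^ 2)) * 8⁻¹ = k := by
    simp only [k]
    field_simp
  have hUk (μ₁ μ₂ : ℝ) : (1 - k) * |U μ₁ - U μ₂| ≤ |μ₁ - μ₂| := by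
    rw [← hck]
    exact one_sub_mul_abs_sub_le_of_implicit_update (by positivity)
      (monotone_studentScore_add (by positivity)) (hU μ₁) (hU μ₂)
  refine ⟨(div_lt_one hk).2 hΦ, fun μ₁ μ₂ => ?_⟩
  rw [add_sub_add_left_eq_sub, ← mul_sub, abs_mul, div_mul_eq_mul_div, le_div_iff₀ hk]
  calc |Φ| * |U μ₁ - U μ₂| * (1 - k) = |Φ| * ((1 - k) * |U μ₁ - U μ₂|) := by ring
    _ ≤ |Φ| * |μ₁ - μ₂| := mul_le_mul_of_nonneg_left (hUk μ₁ μ₂) (abs_nonneg Φ)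

theorem stmt10 (ν σ H ω Φ : ℝ) (hν : 0 < ν) (hσ : 0 < σ) (hH : 0 < H)
    (hH1 : H * (ν + 1) / (8 * ν * σ ^ 2) < 1)
    (hΦ : |Φ| < 1 - H * (ν + 1) / (8 * ν * σ ^ 2))
    (y : ℝ) (U : ℝ → ℝ)
    (hU : ∀ μ : ℝ, U μ = μ + H * ((ν + 1) / (ν * σ ^ 2)) *
      ((y - U μ) / (1 + (y - U μ) ^ 2 / (ν * σ ^ 2)))) :
    |Φ| / (1 - H * (ν + 1) / (8 * ν * σ ^ 2)) < 1 ∧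
    ∀ μ₁ μ₂ : ℝ,
      |(ω + Φ * U μ₁) - (ω + Φ * U μ₂)| ≤
        (|Φ| / (1 - H * (ν + 1) / (8 * ν * σ ^ 2))) * |μ₁ - μ₂| :=
  stmt10_general ν σ H ω Φ hν hσ hH hΦ y U hU
end

section
/- Let f : ℝ^K → ℝ be twice continuously differentiable with f + (α/2)‖·‖² concave for α ≥ 0, let P be symmetric positive definite, and let θ₀, θ* ∈ ℝ^K. Let θ₁ be the unique maximizer of θ ↦ f(θ) − (1/2)(θ−θ₀)ᵀP(θ−θ₀). Define I* := −∫₀¹ Hess f(u θ₁ + (1−u) θ*) du. Then P^{1/2}(θ₁ − θ*) + P^{−1/2}(∇f(θ*) − ∇f(θ₁)) = P^{1/2}(θ₀ − θ*) + P^{−1/2}∇f(θ*), and consequently ‖θ₁ − θ*‖²_{P + 2I* + I* P⁻¹ I*} = ‖θ₀ − θ*‖²_P + 2⟨θ₀ − θ*, ∇f(θ*)⟩ + ‖∇f(θ*)‖²_{P⁻¹}. -/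
/-!
Stationarity of the penalized objective at its maximizer gives `∇f(θ₁) = P(θ₁ - θ₀)`, and the
fundamental theorem of calculus for `∇f` along the segment from `θ*` to `θ₁` gives
`I*(θ₁ - θ*) = ∇f(θ*) - ∇f(θ₁)`. Adding them,
`(P + I*)(θ₁ - θ*) = P(θ₀ - θ*) + ∇f(θ*)`.
Applying `P^{-1/2}` gives the first identity; evaluating the quadratic form of `P⁻¹` on both
sides, with `P` and `I*` symmetric, gives the second.
-/

open Matrix
open scoped RealInnerProductSpace

noncomputable section

/-- The square root of a positive semidefinite matrix, as `Matrix.PosSemidef.sqrt` was defined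
in the older Mathlib. -/
def posSemidefSqrt {n : Type*} [Fintype n] [DecidableEq n] {A : Matrix n n ℝ}
    (hA : A.PosSemidef) : Matrix n n ℝ :=
  hA.1.eigenvectorUnitary.1 * diagonal ((↑) ∘ (√·) ∘ hA.1.eigenvalues) *
  (star hA.1.eigenvectorUnitary : Matrix n n ℝ)

theorem posSemidefSqrt_mul_self {n : Type*} [Fintype n] [DecidableEq n] {A : Matrix n n ℝ}
    (hA : A.PosSemidef) : posSemidefSqrt hA * posSemidefSqrt hA = A := by
  have hA' : IsSelfAdjoint A := hA.1
  have hspec := (posSemidef_iff_isHermitian_and_spectrum_nonneg.1 hA).2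
  have hsqrt : posSemidefSqrt hA = cfc Real.sqrt A := by rw [hA.1.cfc_eq]; rfl
  rw [hsqrt, ← cfc_mul Real.sqrt Real.sqrt A]
  exact (cfc_congr fun x hx => Real.mul_self_sqrt (hspec hx)).trans (cfc_id' ℝ A)

section QuadraticForm

variable {n R : Type*} [Fintype n] [DecidableEq n] [CommRing R] {P : Matrix n n R}

theorem inv_mul_eq_of_mul_self_eq {S : Matrix n n R} (hSP : S * S = P) (hdet : IsUnit P.det) :
    S⁻¹ * P = S := by
  have hS : IsUnit S.det := isUnit_of_mul_isUnit_left (by rwa [← det_mul, hSP])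
  rw [← hSP, ← Matrix.mul_assoc, nonsing_inv_mul _ hS, Matrix.one_mul]

theorem mulVec_add_dotProduct_inv_mulVec (hP : P.IsSymm) (hdet : IsUnit P.det) (x y : n → R) :
    (P *ᵥ x + y) ⬝ᵥ P⁻¹ *ᵥ (P *ᵥ x + y) = x ⬝ᵥ P *ᵥ x + 2 * (x ⬝ᵥ y) + y ⬝ᵥ P⁻¹ *ᵥ y := by
  have hcancel : P⁻¹ *ᵥ (P *ᵥ x) = x := by
    rw [mulVec_mulVec, nonsing_inv_mul _ hdet, one_mulVec]
  have hcross : (P *ᵥ x) ⬝ᵥ P⁻¹ *ᵥ y = x ⬝ᵥ y := by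
    rw [← hP.eq, mulVec_transpose, ← dotProduct_mulVec, hP.eq, mulVec_mulVec,
      mul_nonsing_inv _ hdet, one_mulVec]
  rw [mulVec_add, hcancel, add_dotProduct, dotProduct_add, dotProduct_add, hcross,
    dotProduct_comm (P *ᵥ x) x, dotProduct_comm y x]
  ring

theorem dotProduct_add_two_smul_add_mul_inv_mul_mulVec (hP : P.IsSymm) (hdet : IsUnit P.det)
    {A : Matrix n n R} (hA : A.IsSymm) (x : n → R) :
    x ⬝ᵥ (P + (2 : R) • A + A * P⁻¹ * A) *ᵥ x =
      (P *ᵥ x + A *ᵥ x) ⬝ᵥ P⁻¹ *ᵥ (P *ᵥ x + A *ᵥ x) := by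
  rw [mulVec_add_dotProduct_inv_mulVec hP hdet, add_mulVec, add_mulVec, smul_mulVec,
    ← mulVec_mulVec, ← mulVec_mulVec, dotProduct_add, dotProduct_add, dotProduct_smul,
    smul_eq_mul]
  congr 1
  rw [dotProduct_mulVec, ← mulVec_transpose, hA.eq]

end QuadraticForm

theorem gradient_eq_of_isLocalMax_sub_half_inner {F : Type*} [NormedAddCommGroup F]
    [InnerProductSpace ℝ F] [CompleteSpace F] {f : F → ℝ} {T : F →L[ℝ] F}
    (hT : (T : F →ₗ[ℝ] F).IsSymmetric) {x₀ x : F} (hf : DifferentiableAt ℝ f x)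
    (hmax : IsLocalMax (fun y => f y - 1 / 2 * ⟪y - x₀, T (y - x₀)⟫) x) :
    gradient f x = T (x - x₀) := by
  have hq : HasFDerivAt (fun y => ⟪y - x₀, T (y - x₀)⟫) (2 • innerSL ℝ (T (x - x₀))) x := by
    have h := (hT.hasStrictFDerivAt_reApplyInnerSelf (x - x₀)).hasFDerivAt.comp x
      ((hasFDerivAt_id x).sub_const x₀)
    rw [ContinuousLinearMap.comp_id] at h
    refine h.congr_of_eventuallyEq (Filter.Eventually.of_forall fun y => ?_)
    simp [ContinuousLinearMap.reApplyInnerSelf_apply, real_inner_comm]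
  have hstat := hmax.hasFDerivAt_eq_zero (hf.hasFDerivAt.sub (hq.const_mul (1 / 2)))
  have hfderiv : fderiv ℝ f x = InnerProductSpace.toDual ℝ F (T (x - x₀)) := by
    rw [sub_eq_zero.1 hstat]
    ext w
    simp
  rw [gradient, hfderiv, LinearIsometryEquiv.symm_apply_apply]

theorem fderiv_apply_sub_fderiv_apply_eq_integral {E F : Type*} [NormedAddCommGroup E]
    [NormedSpace ℝ E] [NormedAddCommGroup F] [NormedSpace ℝ F] [CompleteSpace F] {f : E → F}
    (hf : ContDiff ℝ 2 f) (a b w : E) :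
    fderiv ℝ f b w - fderiv ℝ f a w =
      ∫ u in (0:ℝ)..1, fderiv ℝ (fderiv ℝ f) (u • b + (1 - u) • a) (b - a) w := by
  set γ : ℝ → E := fun u => u • b + (1 - u) • a
  have hγ : ∀ u, HasDerivAt γ (b - a) u := fun u => by
    convert ((hasDerivAt_id u).smul_const (b - a)).const_add a using 1
    · funext u
      simp only [γ, id, smul_sub, sub_smul, one_smul]
      abel
    · rw [one_smul]
  have hf' : ContDiff ℝ 1 (fderiv ℝ f) := hf.fderiv_right (by norm_num)
  have hderiv : ∀ u, HasDerivAt (fun u => fderiv ℝ f (γ u) w)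
      (fderiv ℝ (fderiv ℝ f) (γ u) (b - a) w) u := fun u =>
    (((hf'.differentiable one_ne_zero) (γ u)).hasFDerivAt.comp_hasDerivAt u (hγ u)).clm_apply
      (hasDerivAt_const u w) |>.congr_deriv (by simp)
  have hcont : Continuous fun u => fderiv ℝ (fderiv ℝ f) (γ u) (b - a) w :=
    ((hf'.continuous_fderiv one_ne_zero).comp (by fun_prop)).clm_apply continuous_const
      |>.clm_apply continuous_const
  simpa [γ] using (intervalIntegral.integral_eq_sub_of_hasDerivAt (fun u _ => hderiv u)
    (hcont.intervalIntegrable 0 1)).symm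

section Hessian

variable {ι : Type*} [Fintype ι] [DecidableEq ι]

theorem EuclideanSpace.gradient_apply (f : EuclideanSpace ℝ ι → ℝ) (x : EuclideanSpace ℝ ι)
    (i : ι) : gradient f x i = fderiv ℝ f x (EuclideanSpace.single i 1) := by
  rw [← inner_gradient_left, EuclideanSpace.inner_single_right]
  simp

theorem EuclideanSpace.map_eq_sum_smul_single {G F : Type*} [AddCommGroup G] [Module ℝ G]
    [FunLike F (EuclideanSpace ℝ ι) G] [LinearMapClass F ℝ (EuclideanSpace ℝ ι) G] (L : F)
    (v : EuclideanSpace ℝ ι) :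
    L v = ∑ j, v j • L (EuclideanSpace.single j 1) := by
  conv_lhs => rw [← (EuclideanSpace.basisFun ι ℝ).sum_repr v]
  simp [map_sum, map_smul]

def segmentHessian (f : EuclideanSpace ℝ ι → ℝ) (a b : EuclideanSpace ℝ ι) : Matrix ι ι ℝ :=
  fun i j => ∫ u in (0:ℝ)..1, iteratedFDeriv ℝ 2 f (u • b + (1 - u) • a)
    ![EuclideanSpace.single i 1, EuclideanSpace.single j 1]

variable {f : EuclideanSpace ℝ ι → ℝ}

theorem isSymm_segmentHessian (hf : ContDiff ℝ 2 f) (a b : EuclideanSpace ℝ ι) :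
    (segmentHessian f a b).IsSymm :=
  IsSymm.ext fun i j => intervalIntegral.integral_congr fun u _ =>
    (hf.contDiffAt.isSymmSndFDerivAt (by simp)).iteratedFDeriv_cons

theorem segmentHessian_mulVec_sub (hf : ContDiff ℝ 2 f) (a b : EuclideanSpace ℝ ι) :
    segmentHessian f a b *ᵥ (b - a) = gradient f b - gradient f a := by
  ext i
  rw [← (isSymm_segmentHessian hf a b).eq, mulVec_transpose, Pi.sub_apply,
    EuclideanSpace.gradient_apply, EuclideanSpace.gradient_apply,
    fderiv_apply_sub_fderiv_apply_eq_integral hf]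
  have hD2 : Continuous (fderiv ℝ (fderiv ℝ f)) :=
    (hf.fderiv_right (by norm_num)).continuous_fderiv one_ne_zero
  simp only [vecMul, dotProduct, segmentHessian, iteratedFDeriv_two_apply, cons_val_zero,
    cons_val_one, ← intervalIntegral.integral_const_mul]
  rw [← intervalIntegral.integral_finsetSum fun j _ =>
    Continuous.intervalIntegrable (by fun_prop) _ _]
  refine intervalIntegral.integral_congr fun u _ => ?_
  rw [EuclideanSpace.map_eq_sum_smul_single (fderiv ℝ (fderiv ℝ f) (u • b + (1 - u) • a))]
  simp

end Hessian

theorem stmt11_general {K : ℕ} (f : EuclideanSpace ℝ (Fin K) → ℝ)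
    (hf : ContDiff ℝ 2 f)
    (P : Matrix (Fin K) (Fin K) ℝ) (hP : P.PosDef)
    (θ₀ θs θ₁ : EuclideanSpace ℝ (Fin K))
    (hmax : ∀ θ : EuclideanSpace ℝ (Fin K),
      f θ - (1/2) * ((θ - θ₀) ⬝ᵥ P.mulVec (θ - θ₀)) ≤
        f θ₁ - (1/2) * ((θ₁ - θ₀) ⬝ᵥ P.mulVec (θ₁ - θ₀)))
    (Istar : Matrix (Fin K) (Fin K) ℝ)
    (hI : ∀ i j : Fin K, Istar i j =
      -∫ u in (0:ℝ)..1, iteratedFDeriv ℝ 2 f (u • θ₁ + (1 - u) • θs)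
        ![EuclideanSpace.single i (1:ℝ), EuclideanSpace.single j 1]) :
    ((show EuclideanSpace ℝ (Fin K) from WithLp.toLp 2 ((posSemidefSqrt hP.posSemidef).mulVec (θ₁ - θs))) +
      (show EuclideanSpace ℝ (Fin K) from
        WithLp.toLp 2 (((posSemidefSqrt hP.posSemidef)⁻¹).mulVec (gradient f θs - gradient f θ₁))) =
     (show EuclideanSpace ℝ (Fin K) from WithLp.toLp 2 ((posSemidefSqrt hP.posSemidef).mulVec (θ₀ - θs))) +
      (show EuclideanSpace ℝ (Fin K) from
        WithLp.toLp 2 (((posSemidefSqrt hP.posSemidef)⁻¹).mulVec (gradV f θs)))) ∧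
    (θ₁ - θs) ⬝ᵥ (P + (2:ℝ) • Istar + Istar * P⁻¹ * Istar).mulVec (θ₁ - θs) =
      (θ₀ - θs) ⬝ᵥ P.mulVec (θ₀ - θs) + 2 * ⟪θ₀ - θs, gradient f θs⟫ +
        gradV f θs ⬝ᵥ (P⁻¹).mulVec (gradV f θs) := by
  have hPsymm : P.IsSymm :=
    (conjTranspose_eq_transpose_of_trivial P).symm.trans hP.isHermitian.eq
  have hPdet : IsUnit P.det := (isUnit_iff_isUnit_det P).1 hP.isUnit
  have hgrad₁ : gradient f θ₁ = toEuclideanCLM (𝕜 := ℝ) P (θ₁ - θ₀) :=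
    gradient_eq_of_isLocalMax_sub_half_inner (isSymmetric_toEuclideanLin_iff.2 hP.isHermitian)
      (hf.differentiable (by norm_num) θ₁) (Filter.Eventually.of_forall
        (by simpa only [inner_toEuclideanCLM, WithLp.ofLp_sub] using hmax))
  have hIstar : Istar = -segmentHessian f θs θ₁ := by ext i j; exact hI i j
  have hmean : Istar *ᵥ (θ₁ - θs) = (gradient f θs - gradient f θ₁ : Fin K → ℝ) := by
    rw [hIstar, neg_mulVec, segmentHessian_mulVec_sub hf, neg_sub]
  have hcore : P *ᵥ (θ₁ - θs) + (gradient f θs - gradient f θ₁ : Fin K → ℝ) =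
      P *ᵥ (θ₀ - θs) + gradV f θs := by
    rw [hgrad₁, ofLp_toEuclideanCLM, WithLp.ofLp_sub]
    simp only [gradV, mulVec_sub]
    abel
  have hSP := inv_mul_eq_of_mul_self_eq (posSemidefSqrt_mul_self hP.posSemidef) hPdet
  refine ⟨?_, ?_⟩
  · have h := congrArg ((posSemidefSqrt hP.posSemidef)⁻¹ *ᵥ ·) hcore
    simp only [mulVec_add, mulVec_mulVec, hSP] at h
    rw [← WithLp.toLp_add, ← WithLp.toLp_add]
    exact congrArg (WithLp.toLp 2) h
  · have hIsymm : Istar.IsSymm := hIstar ▸ (isSymm_segmentHessian hf θs θ₁).neg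
    have hinner : ⟪θ₀ - θs, gradient f θs⟫ = (θ₀ - θs) ⬝ᵥ gradV f θs := by
      rw [EuclideanSpace.inner_eq_star_dotProduct, star_trivial, dotProduct_comm, gradV]
    calc _ = (P *ᵥ (θ₁ - θs) + Istar *ᵥ (θ₁ - θs)) ⬝ᵥ
            P⁻¹ *ᵥ (P *ᵥ (θ₁ - θs) + Istar *ᵥ (θ₁ - θs)) :=
          dotProduct_add_two_smul_add_mul_inv_mul_mulVec hPsymm hPdet hIsymm _
      _ = (P *ᵥ (θ₀ - θs) + gradV f θs) ⬝ᵥ P⁻¹ *ᵥ (P *ᵥ (θ₀ - θs) + gradV f θs) := by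
          rw [hmean, hcore]
      _ = _ := by rw [mulVec_add_dotProduct_inv_mulVec hPsymm hPdet, hinner, WithLp.ofLp_sub]

theorem stmt11 {K : ℕ} (f : EuclideanSpace ℝ (Fin K) → ℝ)
    (hf : ContDiff ℝ 2 f) (α : ℝ) (hα : 0 ≤ α)
    (hconc : ConcaveOn ℝ Set.univ (fun θ => f θ + α / 2 * ‖θ‖ ^ 2))
    (P : Matrix (Fin K) (Fin K) ℝ) (hP : P.PosDef)
    (θ₀ θs θ₁ : EuclideanSpace ℝ (Fin K))
    (hmax : ∀ θ : EuclideanSpace ℝ (Fin K),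
      f θ - (1/2) * ((θ - θ₀) ⬝ᵥ P.mulVec (θ - θ₀)) ≤
        f θ₁ - (1/2) * ((θ₁ - θ₀) ⬝ᵥ P.mulVec (θ₁ - θ₀)))
    (huniq : ∀ θ : EuclideanSpace ℝ (Fin K),
      (∀ θ' : EuclideanSpace ℝ (Fin K),
        f θ' - (1/2) * ((θ' - θ₀) ⬝ᵥ P.mulVec (θ' - θ₀)) ≤
          f θ - (1/2) * ((θ - θ₀) ⬝ᵥ P.mulVec (θ - θ₀))) → θ = θ₁)
    (Istar : Matrix (Fin K) (Fin K) ℝ)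
    (hI : ∀ i j : Fin K, Istar i j =
      -∫ u in (0:ℝ)..1, iteratedFDeriv ℝ 2 f (u • θ₁ + (1 - u) • θs)
        ![EuclideanSpace.single i (1:ℝ), EuclideanSpace.single j 1]) :
    ((show EuclideanSpace ℝ (Fin K) from WithLp.toLp 2 ((posSemidefSqrt hP.posSemidef).mulVec (θ₁ - θs))) +
      (show EuclideanSpace ℝ (Fin K) from
        WithLp.toLp 2 (((posSemidefSqrt hP.posSemidef)⁻¹).mulVec (gradient f θs - gradient f θ₁))) =
     (show EuclideanSpace ℝ (Fin K) from WithLp.toLp 2 ((posSemidefSqrt hP.posSemidef).mulVec (θ₀ - θs))) +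
      (show EuclideanSpace ℝ (Fin K) from
        WithLp.toLp 2 (((posSemidefSqrt hP.posSemidef)⁻¹).mulVec (gradV f θs)))) ∧
    (θ₁ - θs) ⬝ᵥ (P + (2:ℝ) • Istar + Istar * P⁻¹ * Istar).mulVec (θ₁ - θs) =
      (θ₀ - θs) ⬝ᵥ P.mulVec (θ₀ - θs) + 2 * ⟪θ₀ - θs, gradient f θs⟫ +
        gradV f θs ⬝ᵥ (P⁻¹).mulVec (gradV f θs) :=
  stmt11_general f hf P hP θ₀ θs θ₁ hmax Istar hI
end
end

section
/- Let f : ℝ^K → ℝ be twice continuously differentiable, P symmetric positive definite, and suppose f + (α/2)‖·‖² is concave for some α ≥ 0. Let θ₀, θ* ∈ ℝ^K and let θ₁ be any point. Define I* := −∫₀¹ Hess f(u θ₁ + (1−u) θ*) du, so that I* ⪰ α·I. Then ‖θ₁ − θ*‖²_{P + 2I* + I* P⁻¹ I*} ≥ ((λmax(P)+α)/λmax(P))² · ‖θ₁ − θ*‖²_P. -/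
/-!
Put `z = θ₁ - θs`. Restricting the concave function `f + (α/2)‖·‖²` to lines shows that every
Hessian of `f` is bounded above by `-α`, and averaging along the segment gives `I* ⪰ α`. The claim
then follows from expanding `zᵀ(P + 2I* + I* P⁻¹ I*)z` and the Rayleigh bounds
`zᵀPz ≤ λmax |z|² ≤ (λmax / α) zᵀI*z` and `α² |z|² ≤ |I*z|² ≤ λmax (I*z)ᵀP⁻¹(I*z)`.
-/

open Matrix Set
open scoped MatrixOrder

section Concavity

variable {E : Type*} [NormedAddCommGroup E]

lemma ConcaveOn.second_derivative_apply_self_nonpos [NormedSpace ℝ E] {g : E → ℝ}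
    {g' : E → E →L[ℝ] ℝ} {g'' : E →L[ℝ] E →L[ℝ] ℝ} {x : E} (hg : ConcaveOn ℝ univ g)
    (hg' : ∀ y, HasFDerivAt g (g' y) y) (hg'' : HasFDerivAt g' g'' x) (v : E) :
    g'' v v ≤ 0 := by
  have hline : ∀ t : ℝ, HasDerivAt (fun s : ℝ => x + s • v) v t := fun t => by
    simpa using ((hasDerivAt_id t).smul_const v).const_add x
  have hφ : ∀ t : ℝ, HasDerivAt (fun s : ℝ => g (x + s • v)) (g' (x + t • v) v) t :=
    fun t => (hg' _).comp_hasDerivAt t (hline t)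
  have hconc : ConcaveOn ℝ univ fun s : ℝ => g (x + s • v) := by
    simpa [Function.comp_def, AffineMap.lineMap_apply, add_comm] using
      hg.comp_affineMap (AffineMap.lineMap x (x + v))
  have hanti : Antitone fun t : ℝ => g' (x + t • v) v := fun a b hab => by
    simpa only [(hφ a).deriv, (hφ b).deriv] using
      hconc.antitoneOn_deriv (fun t _ => (hφ t).differentiableAt) (mem_univ a) (mem_univ b) hab
  have hψ : HasDerivAt (fun t : ℝ => g' (x + t • v) v) (g'' v v) 0 := by
    have h0 : HasFDerivAt g' g'' (x + (0 : ℝ) • v) := by rwa [zero_smul, add_zero]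
    exact (ContinuousLinearMap.apply ℝ ℝ v).hasFDerivAt.comp_hasDerivAt 0
      (h0.comp_hasDerivAt 0 (hline 0))
  exact hψ.deriv ▸ hanti.deriv_nonpos

lemma fderiv_fderiv_apply_self_le_of_concaveOn_add_norm_sq [InnerProductSpace ℝ E] {f : E → ℝ}
    (hf : ContDiff ℝ 2 f) {α : ℝ} (hconc : ConcaveOn ℝ univ fun θ => f θ + α / 2 * ‖θ‖ ^ 2)
    (x v : E) : fderiv ℝ (fderiv ℝ f) x v v ≤ -(α * ‖v‖ ^ 2) := by
  -- `innerSL ℝ` is typed as conjugate-linear; over `ℝ` it is a plain bilinear map.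
  let L : E →L[ℝ] E →L[ℝ] ℝ := innerSL ℝ
  have hf1 : Differentiable ℝ f := hf.differentiable two_ne_zero
  have hf2 : Differentiable ℝ (fderiv ℝ f) :=
    (hf.fderiv_right (m := 1) le_rfl).differentiable one_ne_zero
  have hg' : ∀ y, HasFDerivAt (fun θ => f θ + α / 2 * ‖θ‖ ^ 2) (fderiv ℝ f y + α • L y) y :=
    fun y => by
      refine ((hf1 y).hasFDerivAt.add
        ((hasStrictFDerivAt_norm_sq y).hasFDerivAt.const_mul (α / 2))).congr_fderiv ?_
      ext w
      simp only [_root_.add_apply, _root_.smul_apply, smul_eq_mul, nsmul_eq_mul,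
        coe_innerSL_apply, L]
      change _ = _ + α * inner ℝ y w
      push_cast
      ring
  have hg'' : HasFDerivAt (fun y => fderiv ℝ f y + α • L y) (fderiv ℝ (fderiv ℝ f) x + α • L) x :=
    (hf2 x).hasFDerivAt.add (L.hasFDerivAt.const_smul α)
  have : fderiv ℝ (fderiv ℝ f) x v v + α * inner ℝ v v ≤ 0 :=
    hconc.second_derivative_apply_self_nonpos hg' hg'' v
  rw [real_inner_self_eq_norm_sq] at this
  linarith

end Concavity

section AveragedHessian

variable {E : Type*} [NormedAddCommGroup E] [InnerProductSpace ℝ E] {f : E → ℝ}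
  {γ : ℝ → E}

lemma Continuous.intervalIntegral_apply_apply {F G : Type*} [NormedAddCommGroup F]
    [NormedSpace ℝ F] [NormedAddCommGroup G] [NormedSpace ℝ G] {H : ℝ → E →L[ℝ] F →L[ℝ] G}
    (hH : Continuous H) (a b : ℝ) (v : E) (w : F) :
    (∫ u in a..b, H u) v w = ∫ u in a..b, H u v w := by
  rw [ContinuousLinearMap.intervalIntegral_apply (hH.intervalIntegrable a b),
    ContinuousLinearMap.intervalIntegral_apply
      ((hH.clm_apply continuous_const).intervalIntegrable a b)]

lemma ContDiff.continuous_fderiv_fderiv_comp (hf : ContDiff ℝ 2 f) (hγ : Continuous γ) :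
    Continuous fun u => fderiv ℝ (fderiv ℝ f) (γ u) :=
  ((hf.fderiv_right (m := 1) le_rfl).continuous_fderiv one_ne_zero).comp hγ

lemma ContDiff.intervalIntegral_fderiv_fderiv_comm (hf : ContDiff ℝ 2 f) (hγ : Continuous γ)
    (a b : ℝ) (v w : E) :
    (∫ u in a..b, fderiv ℝ (fderiv ℝ f) (γ u)) v w =
      (∫ u in a..b, fderiv ℝ (fderiv ℝ f) (γ u)) w v := by
  simp only [(hf.continuous_fderiv_fderiv_comp hγ).intervalIntegral_apply_apply,
    (hf.contDiffAt.isSymmSndFDerivAt (by simp)).eq v w]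

lemma mul_norm_sq_le_neg_intervalIntegral_fderiv_fderiv (hf : ContDiff ℝ 2 f)
    (hγ : Continuous γ) {α : ℝ} (hconc : ConcaveOn ℝ univ fun θ => f θ + α / 2 * ‖θ‖ ^ 2)
    (v : E) : α * ‖v‖ ^ 2 ≤ -(∫ u in (0:ℝ)..1, fderiv ℝ (fderiv ℝ f) (γ u)) v v := by
  have hcont := hf.continuous_fderiv_fderiv_comp hγ
  rw [hcont.intervalIntegral_apply_apply, ← intervalIntegral.integral_neg]
  calc α * ‖v‖ ^ 2 = ∫ _ in (0:ℝ)..1, α * ‖v‖ ^ 2 := by simp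
    _ ≤ _ := intervalIntegral.integral_mono zero_le_one intervalIntegrable_const
        (((hcont.clm_apply continuous_const).clm_apply continuous_const).neg.intervalIntegrable
          0 1)
        fun u => le_neg_of_le_neg
          (fderiv_fderiv_apply_self_le_of_concaveOn_add_norm_sq hf hconc (γ u) v)

end AveragedHessian

namespace Matrix

lemma IsHermitian.mulVec_dotProduct {n : Type*} [Fintype n] {A : Matrix n n ℝ}
    (hA : A.IsHermitian) (x y : n → ℝ) : A *ᵥ x ⬝ᵥ y = x ⬝ᵥ A *ᵥ y := by
  rw [dotProduct_mulVec, ← mulVec_transpose, ← conjTranspose_eq_transpose_of_trivial, hA.eq,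
    dotProduct_comm]

lemma PosSemidef.isHermitian_of_sub_smul_one {n : Type*} [DecidableEq n] {A : Matrix n n ℝ}
    {c : ℝ} (h : (A - c • 1).PosSemidef) : A.IsHermitian := by
  simpa using h.1.add (isHermitian_one.smul (IsSelfAdjoint.all c))

variable {n : Type*} [Fintype n] [DecidableEq n]

lemma PosSemidef.mul_dotProduct_le_of_sub_smul_one {A : Matrix n n ℝ} {c : ℝ}
    (h : (A - c • 1).PosSemidef) (x : n → ℝ) : c * (x ⬝ᵥ x) ≤ x ⬝ᵥ A *ᵥ x := by
  simpa [sub_mulVec, smul_mulVec, dotProduct_smul] using h.dotProduct_mulVec_nonneg x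

lemma PosSemidef.dotProduct_le_of_smul_one_sub {A : Matrix n n ℝ} {c : ℝ}
    (h : (c • 1 - A).PosSemidef) (x : n → ℝ) : x ⬝ᵥ A *ᵥ x ≤ c * (x ⬝ᵥ x) := by
  simpa [sub_mulVec, smul_mulVec, dotProduct_smul] using h.dotProduct_mulVec_nonneg x

lemma PosSemidef.sq_mul_dotProduct_le_of_sub_smul_one {A : Matrix n n ℝ} {c : ℝ} (hc : 0 ≤ c)
    (h : (A - c • 1).PosSemidef) (x : n → ℝ) : c ^ 2 * (x ⬝ᵥ x) ≤ A *ᵥ x ⬝ᵥ A *ᵥ x := by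
  have hsq : 0 ≤ (A *ᵥ x - c • x) ⬝ᵥ (A *ᵥ x - c • x) :=
    Finset.sum_nonneg fun i _ => mul_self_nonneg _
  have hcA := mul_le_mul_of_nonneg_left (h.mul_dotProduct_le_of_sub_smul_one x) hc
  have hsymm := h.isHermitian_of_sub_smul_one.mulVec_dotProduct x x
  simp only [sub_dotProduct, dotProduct_sub, smul_dotProduct, dotProduct_smul, smul_eq_mul] at hsq
  nlinarith

lemma IsHermitian.dotProduct_mulVec_le_of_spectrum_le {A : Matrix n n ℝ} (hA : A.IsHermitian)
    {c : ℝ} (h : ∀ t ∈ spectrum ℝ A, t ≤ c) (x : n → ℝ) : x ⬝ᵥ A *ᵥ x ≤ c * (x ⬝ᵥ x) := by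
  have hle := le_iff.mp (le_algebraMap_of_spectrum_le h hA.isSelfAdjoint)
  rw [Algebra.algebraMap_eq_smul_one] at hle
  exact hle.dotProduct_le_of_smul_one_sub x

lemma IsHermitian.mul_dotProduct_le_of_le_spectrum {A : Matrix n n ℝ} (hA : A.IsHermitian)
    {c : ℝ} (h : ∀ t ∈ spectrum ℝ A, c ≤ t) (x : n → ℝ) : c * (x ⬝ᵥ x) ≤ x ⬝ᵥ A *ᵥ x := by
  have hle := le_iff.mp (algebraMap_le_of_le_spectrum h hA.isSelfAdjoint)
  rw [Algebra.algebraMap_eq_smul_one] at hle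
  exact hle.mul_dotProduct_le_of_sub_smul_one x

lemma PosDef.dotProduct_le_mul_dotProduct_inv_mulVec {P : Matrix n n ℝ} (hP : P.PosDef)
    {c : ℝ} (hc : 0 < c) (h : ∀ i, hP.1.eigenvalues i ≤ c) (x : n → ℝ) :
    x ⬝ᵥ x ≤ c * (x ⬝ᵥ P⁻¹ *ᵥ x) := by
  have hspec : ∀ t ∈ spectrum ℝ P⁻¹, c⁻¹ ≤ t := by
    intro t ht
    obtain ⟨u, rfl⟩ := hP.isUnit
    rw [← coe_units_inv, ← spectrum.map_inv, Set.mem_inv,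
      hP.1.spectrum_real_eq_range_eigenvalues] at ht
    obtain ⟨i, hi⟩ := ht
    simpa [hi] using inv_anti₀ (hP.eigenvalues_pos i) (h i)
  have := hP.inv.1.mul_dotProduct_le_of_le_spectrum hspec x
  rwa [inv_mul_le_iff₀ hc] at this

lemma PosDef.sq_add_div_mul_dotProduct_mulVec_le {P I : Matrix n n ℝ} (hP : P.PosDef) {lmax : ℝ}
    (hlmax : IsGreatest (Set.range hP.1.eigenvalues) lmax) {α : ℝ} (hα : 0 ≤ α)
    (hI : (I - α • 1).PosSemidef) (x : n → ℝ) :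
    ((lmax + α) / lmax) ^ 2 * (x ⬝ᵥ P *ᵥ x) ≤ x ⬝ᵥ (P + (2:ℝ) • I + I * P⁻¹ * I) *ᵥ x := by
  have hle : ∀ i, hP.1.eigenvalues i ≤ lmax := fun i => hlmax.2 ⟨i, rfl⟩
  have hpos : 0 < lmax := by
    obtain ⟨i, rfl⟩ := hlmax.1
    exact hP.eigenvalues_pos i
  have hP_le : x ⬝ᵥ P *ᵥ x ≤ lmax * (x ⬝ᵥ x) := hP.1.dotProduct_mulVec_le_of_spectrum_le
    (by rw [hP.1.spectrum_real_eq_range_eigenvalues]; exact hlmax.2) x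
  have hI_ge := hI.mul_dotProduct_le_of_sub_smul_one x
  have hI_sq := hI.sq_mul_dotProduct_le_of_sub_smul_one hα x
  have hPinv_ge := hP.dotProduct_le_mul_dotProduct_inv_mulVec hpos hle (I *ᵥ x)
  have hexpand : x ⬝ᵥ (P + (2:ℝ) • I + I * P⁻¹ * I) *ᵥ x =
      x ⬝ᵥ P *ᵥ x + 2 * (x ⬝ᵥ I *ᵥ x) + I *ᵥ x ⬝ᵥ P⁻¹ *ᵥ (I *ᵥ x) := by
    rw [hI.isHermitian_of_sub_smul_one.mulVec_dotProduct, add_mulVec, add_mulVec, smul_mulVec,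
      ← mulVec_mulVec, ← mulVec_mulVec, dotProduct_add, dotProduct_add, dotProduct_smul,
      smul_eq_mul]
  rw [hexpand, div_pow, div_mul_eq_mul_div, div_le_iff₀ (by positivity)]
  have h1 := mul_le_mul_of_nonneg_left hP_le (mul_nonneg hα hpos.le)
  have h2 := mul_le_mul_of_nonneg_left hP_le (sq_nonneg α)
  have h3 := mul_le_mul_of_nonneg_left hI_ge hpos.le
  nlinarith

end Matrix

section BilinearForms

variable {ι : Type*} [Fintype ι] [DecidableEq ι]

lemma EuclideanSpace.dotProduct_mulVec_eq_apply
    (B : EuclideanSpace ℝ ι →L[ℝ] EuclideanSpace ℝ ι →L[ℝ] ℝ) {M : Matrix ι ι ℝ}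
    (hM : ∀ i j, M i j = B (EuclideanSpace.single i 1) (EuclideanSpace.single j 1))
    (x y : EuclideanSpace ℝ ι) : x.ofLp ⬝ᵥ M *ᵥ y.ofLp = B x y := by
  let b := (EuclideanSpace.basisFun ι ℝ).toBasis
  have hM' : M = LinearMap.toMatrix₂ b b B.toLinearMap₁₂ := by
    ext i j
    simp [b, hM, LinearMap.toMatrix₂_apply]
  rw [hM', ← B.toLinearMap₁₂_apply_apply_apply, apply_eq_dotProduct_toMatrix₂_mulVec b b]
  rfl

lemma posSemidef_sub_smul_one_of_apply_single
    (B : EuclideanSpace ℝ ι →L[ℝ] EuclideanSpace ℝ ι →L[ℝ] ℝ) {M : Matrix ι ι ℝ}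
    (hM : ∀ i j, M i j = B (EuclideanSpace.single i 1) (EuclideanSpace.single j 1))
    (hB : ∀ v w, B v w = B w v) {c : ℝ} (hc : ∀ v, c * ‖v‖ ^ 2 ≤ B v v) :
    (M - c • 1).PosSemidef := by
  refine PosSemidef.of_dotProduct_mulVec_nonneg ?_ fun x => ?_
  · refine IsHermitian.sub (IsHermitian.ext fun i j => ?_)
      (isHermitian_one.smul (IsSelfAdjoint.all c))
    simp [hM, hB (EuclideanSpace.single i 1)]
  · have hx : x ⬝ᵥ x = ‖WithLp.toLp 2 x‖ ^ 2 := by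
      rw [EuclideanSpace.norm_sq_eq]
      simp [dotProduct, sq]
    have := hc (WithLp.toLp 2 x)
    rw [← EuclideanSpace.dotProduct_mulVec_eq_apply B hM, ← hx] at this
    simp only [star_trivial, sub_mulVec, smul_mulVec, one_mulVec, dotProduct_sub, dotProduct_smul,
      smul_eq_mul]
    exact sub_nonneg.mpr this

end BilinearForms

theorem stmt12_general {K : ℕ} (f : EuclideanSpace ℝ (Fin K) → ℝ)
    (hf : ContDiff ℝ 2 f) (α : ℝ) (hα : 0 ≤ α)
    (hconc : ConcaveOn ℝ Set.univ (fun θ => f θ + α / 2 * ‖θ‖ ^ 2))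
    (P : Matrix (Fin K) (Fin K) ℝ) (hP : P.PosDef)
    (lmax : ℝ) (hlmax : IsGreatest (Set.range hP.1.eigenvalues) lmax)
    (θs θ₁ : EuclideanSpace ℝ (Fin K))
    (Istar : Matrix (Fin K) (Fin K) ℝ)
    (hI : ∀ i j : Fin K, Istar i j =
      -∫ u in (0:ℝ)..1, iteratedFDeriv ℝ 2 f (u • θ₁ + (1 - u) • θs)
        ![EuclideanSpace.single i (1:ℝ), EuclideanSpace.single j 1]) :
    (Istar - α • (1 : Matrix (Fin K) (Fin K) ℝ)).PosSemidef ∧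
    ((lmax + α) / lmax) ^ 2 * ((θ₁ - θs) ⬝ᵥ P.mulVec (θ₁ - θs)) ≤
      (θ₁ - θs) ⬝ᵥ (P + (2:ℝ) • Istar + Istar * P⁻¹ * Istar).mulVec (θ₁ - θs) := by
  have hγ : Continuous fun u : ℝ => u • θ₁ + (1 - u) • θs := by fun_prop
  set Hbar := ∫ u in (0:ℝ)..1, fderiv ℝ (fderiv ℝ f) (u • θ₁ + (1 - u) • θs)
  have hentries : ∀ i j, Istar i j =
      (-Hbar) (EuclideanSpace.single i 1) (EuclideanSpace.single j 1) := by
    intro i j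
    simp_rw [hI, _root_.neg_apply, Hbar,
      (hf.continuous_fderiv_fderiv_comp hγ).intervalIntegral_apply_apply, iteratedFDeriv_two_apply]
    rfl
  have hpsd := posSemidef_sub_smul_one_of_apply_single (-Hbar) hentries
    (fun v w => by simp only [_root_.neg_apply, hf.intervalIntegral_fderiv_fderiv_comm hγ, Hbar])
    (mul_norm_sq_le_neg_intervalIntegral_fderiv_fderiv hf hγ hconc)
  exact ⟨hpsd, hP.sq_add_div_mul_dotProduct_mulVec_le hlmax hα hpsd _⟩

theorem stmt12 {K : ℕ} (f : EuclideanSpace ℝ (Fin K) → ℝ)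
    (hf : ContDiff ℝ 2 f) (α : ℝ) (hα : 0 ≤ α)
    (hconc : ConcaveOn ℝ Set.univ (fun θ => f θ + α / 2 * ‖θ‖ ^ 2))
    (P : Matrix (Fin K) (Fin K) ℝ) (hP : P.PosDef)
    (lmax : ℝ) (hlmax : IsGreatest (Set.range hP.1.eigenvalues) lmax)
    (θ₀ θs θ₁ : EuclideanSpace ℝ (Fin K))
    (Istar : Matrix (Fin K) (Fin K) ℝ)
    (hI : ∀ i j : Fin K, Istar i j =
      -∫ u in (0:ℝ)..1, iteratedFDeriv ℝ 2 f (u • θ₁ + (1 - u) • θs)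
        ![EuclideanSpace.single i (1:ℝ), EuclideanSpace.single j 1]) :
    (Istar - α • (1 : Matrix (Fin K) (Fin K) ℝ)).PosSemidef ∧
    ((lmax + α) / lmax) ^ 2 * ((θ₁ - θs) ⬝ᵥ P.mulVec (θ₁ - θs)) ≤
      (θ₁ - θs) ⬝ᵥ (P + (2:ℝ) • Istar + Istar * P⁻¹ * Istar).mulVec (θ₁ - θs) :=
  stmt12_general f hf α hα hconc P hP lmax hlmax θs θ₁ Istar hI
end

section
/- Let σ² > 0, let H be a symmetric positive-definite K×K matrix, x ∈ ℝ^K, y ∈ ℝ, β₀ ∈ ℝ^K. Then the unique maximizer β₁ of β ↦ −(y − βᵀx)²/(2σ²) − (1/2)(β−β₀)ᵀH⁻¹(β−β₀) satisfies β₁ = β₀ + (σ²/(σ² + xᵀHx)) · H · (x(y − β₀ᵀx)/σ²). -/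
open Matrix

/-! Around any `β` satisfying the first-order condition `H⁻¹ (β - β₀) = ((y - βᵀx) / σ²) x`, the
objective at `β + δ` is exactly its value at `β` minus `(δᵀx)² / (2σ²) + δᵀH⁻¹δ / 2`, so such a `β` is
a global maximizer and hence equals `β₁`. The first-order condition is solved by `β₀ + c H x` with
`c (σ² + xᵀHx) = y - β₀ᵀx`, which is the Sherman–Morrison form of the update. -/

noncomputable section

section

variable {n : Type*} [Fintype n]

lemma Matrix.IsSymm.dotProduct_mulVec_comm_s15 {R : Type*} [CommSemiring R] {A : Matrix n n R}
    (hA : A.IsSymm) (u v : n → R) : u ⬝ᵥ A *ᵥ v = v ⬝ᵥ A *ᵥ u := by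
  rw [dotProduct_mulVec, ← mulVec_transpose, hA.eq, dotProduct_comm]

lemma Matrix.IsSymm.dotProduct_mulVec_add_self {R : Type*} [CommRing R] {A : Matrix n n R}
    (hA : A.IsSymm) (u δ : n → R) :
    (u + δ) ⬝ᵥ A *ᵥ (u + δ) = u ⬝ᵥ A *ᵥ u + 2 * (δ ⬝ᵥ A *ᵥ u) + δ ⬝ᵥ A *ᵥ δ := by
  simp only [mulVec_add, dotProduct_add, add_dotProduct, hA.dotProduct_mulVec_comm_s15 u δ]
  ring

/-- Log-likelihood of `β` for one Gaussian regression observation `(x, y)` with noise variance `σ2`,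
plus the log-density of the prior `N(β₀, A⁻¹)`, up to additive constants. -/
def logPosterior (σ2 y : ℝ) (x β₀ : n → ℝ) (A : Matrix n n ℝ) (β : n → ℝ) : ℝ :=
  -(y - β ⬝ᵥ x) ^ 2 / (2 * σ2) - (1/2) * ((β - β₀) ⬝ᵥ A *ᵥ (β - β₀))

-- `hβ` says that `β` is a critical point.
lemma logPosterior_add_of_mulVec_eq {σ2 y : ℝ} (hσ2 : σ2 ≠ 0) {x β₀ β : n → ℝ}
    {A : Matrix n n ℝ} (hA : A.IsSymm) (hβ : A *ᵥ (β - β₀) = ((y - β ⬝ᵥ x) / σ2) • x)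
    (δ : n → ℝ) :
    logPosterior σ2 y x β₀ A (β + δ) =
      logPosterior σ2 y x β₀ A β - (δ ⬝ᵥ x) ^ 2 / (2 * σ2) - (1/2) * (δ ⬝ᵥ A *ᵥ δ) := by
  have hsub : β + δ - β₀ = (β - β₀) + δ := by abel
  simp only [logPosterior, hsub, hA.dotProduct_mulVec_add_self, hβ, dotProduct_smul,
    add_dotProduct, smul_eq_mul]
  field_simp
  ring

lemma logPosterior_le_of_mulVec_eq {σ2 y : ℝ} (hσ2 : 0 < σ2) {x β₀ β : n → ℝ}
    {A : Matrix n n ℝ} (hA : A.PosSemidef) (hβ : A *ᵥ (β - β₀) = ((y - β ⬝ᵥ x) / σ2) • x)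
    (β' : n → ℝ) : logPosterior σ2 y x β₀ A β' ≤ logPosterior σ2 y x β₀ A β := by
  have hexp := logPosterior_add_of_mulVec_eq hσ2.ne'
    (isHermitian_iff_isSymm.mp hA.isHermitian) hβ (β' - β)
  rw [add_sub_cancel] at hexp
  have hquad : 0 ≤ (β' - β) ⬝ᵥ A *ᵥ (β' - β) := by
    simpa using hA.dotProduct_mulVec_nonneg (β' - β)
  have hsq : 0 ≤ ((β' - β) ⬝ᵥ x) ^ 2 / (2 * σ2) := by positivity
  linarith

def posteriorMode [DecidableEq n] (σ2 y : ℝ) (x β₀ : n → ℝ) (H : Matrix n n ℝ) : n → ℝ :=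
  β₀ + (σ2 / (σ2 + x ⬝ᵥ H *ᵥ x)) • H *ᵥ (((y - β₀ ⬝ᵥ x) / σ2) • x)

lemma inv_mulVec_posteriorMode_sub [DecidableEq n] {σ2 : ℝ} (hσ2 : 0 < σ2) (y : ℝ)
    (x β₀ : n → ℝ) {H : Matrix n n ℝ} (hH : H.PosDef) :
    H⁻¹ *ᵥ (posteriorMode σ2 y x β₀ H - β₀) =
      ((y - posteriorMode σ2 y x β₀ H ⬝ᵥ x) / σ2) • x := by
  have hq : 0 ≤ x ⬝ᵥ H *ᵥ x := by simpa using hH.posSemidef.dotProduct_mulVec_nonneg x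
  have hc : σ2 + x ⬝ᵥ H *ᵥ x ≠ 0 := by positivity
  have hdet : IsUnit H.det := isUnit_iff_ne_zero.mpr hH.det_pos.ne'
  simp only [posteriorMode, add_sub_cancel_left, mulVec_smul, mulVec_mulVec,
    nonsing_inv_mul H hdet, one_mulVec, smul_smul, add_dotProduct, smul_dotProduct,
    dotProduct_comm (H *ᵥ x) x, smul_eq_mul]
  congr 1
  field_simp
  ring

end

theorem stmt15_general {K : ℕ} (σ2 : ℝ) (hσ2 : 0 < σ2)
    (H : Matrix (Fin K) (Fin K) ℝ) (hH : H.PosDef)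
    (x β₀ β₁ : Fin K → ℝ) (y : ℝ)
    (huniq : ∀ β : Fin K → ℝ,
      (∀ β' : Fin K → ℝ,
        -(y - β' ⬝ᵥ x) ^ 2 / (2 * σ2) -
            (1/2) * ((β' - β₀) ⬝ᵥ (H⁻¹).mulVec (β' - β₀)) ≤
          -(y - β ⬝ᵥ x) ^ 2 / (2 * σ2) -
            (1/2) * ((β - β₀) ⬝ᵥ (H⁻¹).mulVec (β - β₀))) → β = β₁) :
    β₁ = β₀ + (σ2 / (σ2 + x ⬝ᵥ H.mulVec x)) •
      H.mulVec (((y - β₀ ⬝ᵥ x) / σ2) • x) :=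
  (huniq _ (logPosterior_le_of_mulVec_eq hσ2 hH.inv.posSemidef
    (inv_mulVec_posteriorMode_sub hσ2 y x β₀ hH))).symm

theorem stmt15 {K : ℕ} (σ2 : ℝ) (hσ2 : 0 < σ2)
    (H : Matrix (Fin K) (Fin K) ℝ) (hH : H.PosDef)
    (x β₀ β₁ : Fin K → ℝ) (y : ℝ)
    (hmax : ∀ β : Fin K → ℝ,
      -(y - β ⬝ᵥ x) ^ 2 / (2 * σ2) -
          (1/2) * ((β - β₀) ⬝ᵥ (H⁻¹).mulVec (β - β₀)) ≤
        -(y - β₁ ⬝ᵥ x) ^ 2 / (2 * σ2) -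
          (1/2) * ((β₁ - β₀) ⬝ᵥ (H⁻¹).mulVec (β₁ - β₀)))
    (huniq : ∀ β : Fin K → ℝ,
      (∀ β' : Fin K → ℝ,
        -(y - β' ⬝ᵥ x) ^ 2 / (2 * σ2) -
            (1/2) * ((β' - β₀) ⬝ᵥ (H⁻¹).mulVec (β' - β₀)) ≤
          -(y - β ⬝ᵥ x) ^ 2 / (2 * σ2) -
            (1/2) * ((β - β₀) ⬝ᵥ (H⁻¹).mulVec (β - β₀))) → β = β₁) :
    β₁ = β₀ + (σ2 / (σ2 + x ⬝ᵥ H.mulVec x)) •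
      H.mulVec (((y - β₀ ⬝ᵥ x) / σ2) • x) :=
  stmt15_general σ2 hσ2 H hH x β₀ β₁ y huniq
end
end

section
/- Fix H > 0, σ > 0, and an observation y ∈ ℝ. For τ ∈ (0,1) and a prediction q ∈ ℝ, define the explicit update E(q,τ) := q − 1[y < q]·H(1−τ)/σ + 1[y > q]·Hτ/σ, and the implicit update U(q,τ) := min{y, E(q,τ)} if y > q, U(q,τ) := max{y, E(q,τ)} if y ≤ q. Then for all 0 < τ₁ < τ₂ < 1 and all predictions q₁ ≤ q₂ (with q₁ ≤ q₂): U(q₁, τ₁) ≤ U(q₂, τ₂). That is, implicit quantile updates preserve the ordering of quantiles. -/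
noncomputable section

/-- Explicit (adaptive CAViaR) quantile update. -/
def Equant (H σ y q τ : ℝ) : ℝ :=
  q - (if y < q then H * (1 - τ) / σ else 0) + (if y > q then H * τ / σ else 0)

/-- Implicit score-driven quantile update: capped at the observation. -/
def Uquant (H σ y q τ : ℝ) : ℝ :=
  if y > q then min y (Equant H σ y q τ) else max y (Equant H σ y q τ)

/-! Below the observation the implicit update moves up by `Hτ/σ` but not past `y`, above it
it moves down by `H(1-τ)/σ` but not past `y`. Hence two ordered predictions on opposite sides
of `y` stay on opposite sides, and two on the same side keep their order because the step
`Hτ/σ` grows and the step `H(1-τ)/σ` shrinks with `τ`. -/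

section

variable {H σ y q τ : ℝ}

theorem Uquant_of_lt (h : q < y) : Uquant H σ y q τ = min y (q + H * τ / σ) := by
  simp [Uquant, Equant, h, h.not_gt]

theorem Uquant_of_gt (h : y < q) : Uquant H σ y q τ = max y (q - H * (1 - τ) / σ) := by
  simp [Uquant, Equant, h, h.not_gt]

theorem Uquant_le_of_le (h : q ≤ y) : Uquant H σ y q τ ≤ y := by
  rcases h.lt_or_eq with h | rfl
  · rw [Uquant_of_lt h]
    exact min_le_left _ _
  · simp [Uquant, Equant]

theorem le_Uquant_of_le (h : y ≤ q) : y ≤ Uquant H σ y q τ := by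
  simp only [Uquant, gt_iff_lt, h.not_gt, if_false]
  exact le_max_left _ _

end

theorem stmt16 (H σ y : ℝ) (hH : 0 < H) (hσ : 0 < σ) :
    ∀ τ₁ τ₂ q₁ q₂ : ℝ, 0 < τ₁ → τ₁ < τ₂ → τ₂ < 1 → q₁ ≤ q₂ →
      Uquant H σ y q₁ τ₁ ≤ Uquant H σ y q₂ τ₂ := by
  intro τ₁ τ₂ q₁ q₂ _ hτ _ hq
  rcases lt_or_ge q₂ y with hq₂ | hq₂
  · rw [Uquant_of_lt (hq.trans_lt hq₂), Uquant_of_lt hq₂]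
    have : H * τ₁ / σ ≤ H * τ₂ / σ := by gcongr
    exact min_le_min_left _ (by linarith)
  rcases lt_or_ge y q₁ with hq₁ | hq₁
  · rw [Uquant_of_gt hq₁, Uquant_of_gt (hq₁.trans_le hq)]
    have : H * (1 - τ₂) / σ ≤ H * (1 - τ₁) / σ := by gcongr
    exact max_le_max_left _ (by linarith)
  · exact (Uquant_le_of_le hq₁).trans (le_Uquant_of_le hq₂)
end
end

section
/- Fix ν > 0, σ > 0, H > 0, a prediction μ₀ ∈ ℝ, and an observation y ∈ ℝ with e := y − μ₀ ≠ 0. Suppose w ∈ ℝ satisfies the cubic equation (1/ν)(e²/σ²)(1−w)² w + w − H(1−w) = 0. Then w ∈ (0, H/(1+H)], and hence the implicit Student's-t location update μ₁ := μ₀ + w·e lies strictly between μ₀ and y (inclusive of neither endpoint unless w = 0 or 1, which cannot occur for 0 < H < ∞): μ₁ ∈ (min{μ₀,y}, max{μ₀,y}). -/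
/-!
Write the cubic as `c (1 - w)² w = H - (1 + H) w` with `c = e² / (ν σ²) ≥ 0`. If `w ≤ 0` the left
side is `≤ 0` while the right side is `≥ H > 0`; so `w > 0`, the left side is `≥ 0`, and
`(1 + H) w ≤ H`. Since `0 < w < 1`, the update `μ₀ + w e` is a strict convex combination of
`μ₀` and `y`.
-/

open Set

lemma pos_of_cubic_eq_zero {c H w : ℝ} (hc : 0 ≤ c) (hH : 0 < H)
    (hcubic : c * (1 - w) ^ 2 * w + w - H * (1 - w) = 0) : 0 < w := by
  by_contra! hw
  have : c * (1 - w) ^ 2 * w ≤ 0 := mul_nonpos_of_nonneg_of_nonpos (by positivity) hw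
  nlinarith

lemma mem_Ioc_of_cubic_eq_zero {c H w : ℝ} (hc : 0 ≤ c) (hH : 0 < H)
    (hcubic : c * (1 - w) ^ 2 * w + w - H * (1 - w) = 0) : w ∈ Ioc 0 (H / (1 + H)) := by
  have hw := pos_of_cubic_eq_zero hc hH hcubic
  have : 0 ≤ c * (1 - w) ^ 2 * w := by positivity
  exact ⟨hw, by rw [le_div_iff₀ (by linarith)]; linarith⟩

lemma add_mul_sub_mem_Ioo_min_max {a b t : ℝ} (hab : a ≠ b) (ht : t ∈ Ioo 0 1) :
    a + t * (b - a) ∈ Ioo (min a b) (max a b) := by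
  rw [← openSegment_eq_Ioo' hab, openSegment_eq_image']
  exact mem_image_of_mem _ ht

theorem stmt17_general (ν σ H μ₀ y w : ℝ) (hν : 0 < ν) (hH : 0 < H)
    (he : y - μ₀ ≠ 0)
    (hcubic : (1 / ν) * ((y - μ₀) ^ 2 / σ ^ 2) * (1 - w) ^ 2 * w + w -
      H * (1 - w) = 0) :
    w ∈ Set.Ioc 0 (H / (1 + H)) ∧
      μ₀ + w * (y - μ₀) ∈ Set.Ioo (min μ₀ y) (max μ₀ y) := by
  have hw := mem_Ioc_of_cubic_eq_zero (by positivity) hH hcubic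
  have hw_lt_one : w < 1 := hw.2.trans_lt ((div_lt_one (by linarith)).2 (by linarith))
  exact ⟨hw, add_mul_sub_mem_Ioo_min_max (sub_ne_zero.1 he).symm ⟨hw.1, hw_lt_one⟩⟩

theorem stmt17 (ν σ H μ₀ y w : ℝ) (hν : 0 < ν) (hσ : 0 < σ) (hH : 0 < H)
    (he : y - μ₀ ≠ 0)
    (hcubic : (1 / ν) * ((y - μ₀) ^ 2 / σ ^ 2) * (1 - w) ^ 2 * w + w -
      H * (1 - w) = 0) :
    w ∈ Set.Ioc 0 (H / (1 + H)) ∧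
      μ₀ + w * (y - μ₀) ∈ Set.Ioo (min μ₀ y) (max μ₀ y) :=
  stmt17_general ν σ H μ₀ y w hν hH he hcubic
end

section
/- Let μ ∈ ℝ, σ > 0, ν > 0, γ > 0, and set ξ := √ν·σ + γ. Then ∫_{−∞}^{∞} [(y − μ)/(1 + (y−μ)²/(ν σ²))] · (1/(π γ)) · (1/(1 + y²/γ²)) dy = −μ ν σ²/(μ² + ξ²). -/
/-!
Write `a = √ν σ`. Partial fractions give an elementary primitive of the integrand: a multiple of
`log ((y - μ)² + a²) - log (y² + γ²)`, which tends to `0` at both ends, plus multiples of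
`arctan ((y - μ) / a)` and `arctan (y / γ)`. The integral is the jump of the arctangent terms
between `-∞` and `+∞`, which collapses to `-μ a² / (μ² + (a + γ)²)`. The decomposition
can degenerate only when `μ = 0`, and then the integrand is odd.
-/

open MeasureTheory Real Filter Topology Bornology ProbabilityTheory
open scoped NNReal

theorem integral_eq_zero_of_odd {G E : Type*} [MeasurableSpace G] [AddGroup G] [MeasurableNeg G]
    [NormedAddCommGroup E] [NormedSpace ℝ E] (μ : Measure G) [μ.IsNegInvariant] {f : G → E}
    (hf : ∀ x, f (-x) = -f x) : ∫ x, f x ∂μ = 0 := by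
  have h := integral_neg_eq_self f μ
  simp only [hf, integral_neg] at h
  have h2 : (2 : ℝ) • ∫ x, f x ∂μ = 0 := by
    rw [two_smul]
    nth_rw 1 [← h]
    exact neg_add_cancel _
  simpa using h2

lemma abs_div_one_add_sq_div_sq_le (t : ℝ) {a : ℝ} (ha : 0 < a) :
    |t / (1 + t ^ 2 / a ^ 2)| ≤ a / 2 := by
  have hpos : 0 < 1 + t ^ 2 / a ^ 2 := by positivity
  rw [abs_div, abs_of_pos hpos, div_le_iff₀ hpos]
  have : 2 * a * |t| ≤ a ^ 2 + t ^ 2 := by nlinarith [sq_nonneg (|t| - a), sq_abs t]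
  field_simp
  nlinarith

lemma tendsto_log_sub_log_cobounded (μ a γ : ℝ) :
    Tendsto (fun y => log ((y - μ) ^ 2 + a ^ 2) - log (y ^ 2 + γ ^ 2)) (cobounded ℝ) (𝓝 0) := by
  have hratio : Tendsto (fun u : ℝ => ((1 - μ * u) ^ 2 + a ^ 2 * u ^ 2) / (1 + γ ^ 2 * u ^ 2))
      (𝓝 0) (𝓝 1) := by
    have : ContinuousAt (fun u : ℝ => ((1 - μ * u) ^ 2 + a ^ 2 * u ^ 2) / (1 + γ ^ 2 * u ^ 2)) 0 :=
      ContinuousAt.div (by fun_prop) (by fun_prop) (by norm_num)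
    simpa using this.tendsto
  have hlog := ((continuousAt_log one_ne_zero).tendsto.comp (hratio.comp tendsto_inv₀_cobounded))
  rw [log_one] at hlog
  refine hlog.congr' ?_
  filter_upwards [eventually_ne_cobounded 0, eventually_ne_cobounded μ] with y hy hyμ
  have hA : 0 < (y - μ) ^ 2 + a ^ 2 := by
    have := sub_ne_zero.mpr hyμ
    positivity
  have hB : 0 < y ^ 2 + γ ^ 2 := by positivity
  rw [Function.comp_apply, Function.comp_apply, ← log_div hA.ne' hB.ne']
  congr 1
  field_simp

noncomputable def cauchyScorePrimitive (μ a γ y : ℝ) : ℝ :=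
  a ^ 2 * γ / (π * ((μ ^ 2 + (a + γ) ^ 2) * (μ ^ 2 + (a - γ) ^ 2))) *
    ((μ ^ 2 - a ^ 2 + γ ^ 2) / 2 * (log ((y - μ) ^ 2 + a ^ 2) - log (y ^ 2 + γ ^ 2))
      + 2 * μ * a * arctan ((y - μ) / a) - μ * (μ ^ 2 + a ^ 2 + γ ^ 2) / γ * arctan (y / γ))

lemma tendsto_arctan_div_atTop {α : Type*} {l : Filter α} {f : α → ℝ} (hf : Tendsto f l atTop)
    {c : ℝ} (hc : 0 < c) : Tendsto (fun x => arctan (f x / c)) l (𝓝 (π / 2)) :=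
  (tendsto_nhds_of_tendsto_nhdsWithin tendsto_arctan_atTop).comp (hf.atTop_div_const hc)

lemma tendsto_arctan_div_atBot {α : Type*} {l : Filter α} {f : α → ℝ} (hf : Tendsto f l atBot)
    {c : ℝ} (hc : 0 < c) : Tendsto (fun x => arctan (f x / c)) l (𝓝 (-(π / 2))) :=
  (tendsto_nhds_of_tendsto_nhdsWithin tendsto_arctan_atBot).comp (hf.atBot_div_const hc)

lemma hasDerivAt_cauchyScorePrimitive {μ a γ : ℝ} (hμ : μ ≠ 0) (ha : a ≠ 0) (hγ : γ ≠ 0) (y : ℝ) :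
    HasDerivAt (cauchyScorePrimitive μ a γ)
      ((y - μ) / (1 + (y - μ) ^ 2 / a ^ 2) * (π⁻¹ * γ * (y ^ 2 + γ ^ 2)⁻¹)) y := by
  have hA : (y - μ) ^ 2 + a ^ 2 ≠ 0 := by positivity
  have hB : y ^ 2 + γ ^ 2 ≠ 0 := by positivity
  have dA : HasDerivAt (fun y => (y - μ) ^ 2 + a ^ 2) (2 * (y - μ)) y := by
    simpa using (((hasDerivAt_id y).sub_const μ).pow 2).add_const (a ^ 2)
  have dB : HasDerivAt (fun y => y ^ 2 + γ ^ 2) (2 * y) y := by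
    simpa using ((hasDerivAt_id y).pow 2).add_const (γ ^ 2)
  have dU : HasDerivAt (fun y => arctan ((y - μ) / a)) (1 / (1 + ((y - μ) / a) ^ 2) * (1 / a)) y :=
    (hasDerivAt_arctan _).comp y (by simpa using ((hasDerivAt_id y).sub_const μ).div_const a)
  have dV : HasDerivAt (fun y => arctan (y / γ)) (1 / (1 + (y / γ) ^ 2) * (1 / γ)) y :=
    (hasDerivAt_arctan _).comp y (by simpa using (hasDerivAt_id y).div_const γ)
  refine ((((((dA.log hA).sub (dB.log hB)).const_mul ((μ ^ 2 - a ^ 2 + γ ^ 2) / 2)).add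
    (dU.const_mul (2 * μ * a))).sub (dV.const_mul (μ * (μ ^ 2 + a ^ 2 + γ ^ 2) / γ))).const_mul
    (a ^ 2 * γ / (π * ((μ ^ 2 + (a + γ) ^ 2) * (μ ^ 2 + (a - γ) ^ 2))))).congr_deriv ?_
  have : μ ^ 2 + (a - γ) ^ 2 ≠ 0 := by positivity
  have : μ ^ 2 + (a + γ) ^ 2 ≠ 0 := by positivity
  field_simp
  ring

lemma tendsto_cauchyScorePrimitive_atTop {μ a γ : ℝ} (hμ : μ ≠ 0) (ha : 0 < a) (hγ : 0 < γ) :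
    Tendsto (cauchyScorePrimitive μ a γ) atTop
      (𝓝 (-μ * a ^ 2 / (μ ^ 2 + (a + γ) ^ 2) / 2)) := by
  have hlog := (tendsto_log_sub_log_cobounded μ a γ).mono_left IsOrderBornology.atTop_le_cobounded
  have hU := tendsto_arctan_div_atTop (tendsto_atTop_add_const_right _ (-μ) tendsto_id) ha
  have hV := tendsto_arctan_div_atTop tendsto_id hγ
  have h : Tendsto (cauchyScorePrimitive μ a γ) atTop _ :=
    (((hlog.const_mul _).add (hU.const_mul _)).sub (hV.const_mul _)).const_mul _
  convert h using 2
  have : μ ^ 2 + (a - γ) ^ 2 ≠ 0 := by positivity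
  field_simp
  ring

lemma tendsto_cauchyScorePrimitive_atBot {μ a γ : ℝ} (hμ : μ ≠ 0) (ha : 0 < a) (hγ : 0 < γ) :
    Tendsto (cauchyScorePrimitive μ a γ) atBot
      (𝓝 (μ * a ^ 2 / (μ ^ 2 + (a + γ) ^ 2) / 2)) := by
  have hlog := (tendsto_log_sub_log_cobounded μ a γ).mono_left IsOrderBornology.atBot_le_cobounded
  have hU := tendsto_arctan_div_atBot (tendsto_atBot_add_const_right _ (-μ) tendsto_id) ha
  have hV := tendsto_arctan_div_atBot tendsto_id hγ
  have h : Tendsto (cauchyScorePrimitive μ a γ) atBot _ :=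
    (((hlog.const_mul _).add (hU.const_mul _)).sub (hV.const_mul _)).const_mul _
  convert h using 2
  have : μ ^ 2 + (a - γ) ^ 2 ≠ 0 := by positivity
  field_simp
  ring

lemma integrable_sub_div_one_add_sq_div_sq_mul (μ : ℝ) {a : ℝ} (ha : 0 < a) {g : ℝ → ℝ}
    (hg : Integrable g) : Integrable fun y => (y - μ) / (1 + (y - μ) ^ 2 / a ^ 2) * g y :=
  hg.bdd_mul (c := a / 2) (Measurable.aestronglyMeasurable (by fun_prop))
    (.of_forall fun y => abs_div_one_add_sq_div_sq_le (y - μ) ha)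

lemma integral_sub_div_one_add_sq_div_sq_mul_cauchyPDFReal_of_ne_zero {μ a : ℝ} {γ : ℝ≥0}
    (hμ : μ ≠ 0) (ha : 0 < a) (hγ : γ ≠ 0) :
    ∫ y, (y - μ) / (1 + (y - μ) ^ 2 / a ^ 2) * cauchyPDFReal 0 γ y =
      -μ * a ^ 2 / (μ ^ 2 + (a + γ) ^ 2) := by
  have hγ' : (0 : ℝ) < γ := by positivity
  rw [integral_of_hasDerivAt_of_tendsto (f := cauchyScorePrimitive μ a γ)
    (fun y => by simpa [cauchyPDFReal_def] using hasDerivAt_cauchyScorePrimitive hμ ha.ne' hγ'.ne' y)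
    (integrable_sub_div_one_add_sq_div_sq_mul μ ha (integrable_cauchyPDFReal 0))
    (tendsto_cauchyScorePrimitive_atBot hμ ha hγ') (tendsto_cauchyScorePrimitive_atTop hμ ha hγ')]
  ring

theorem integral_sub_div_one_add_sq_div_sq_mul_cauchyPDFReal (μ : ℝ) {a : ℝ} {γ : ℝ≥0}
    (ha : 0 < a) (hγ : γ ≠ 0) :
    ∫ y, (y - μ) / (1 + (y - μ) ^ 2 / a ^ 2) * cauchyPDFReal 0 γ y =
      -μ * a ^ 2 / (μ ^ 2 + (a + γ) ^ 2) := by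
  rcases eq_or_ne μ 0 with rfl | hμ
  · rw [neg_zero, zero_mul, zero_div]
    refine integral_eq_zero_of_odd volume fun y => ?_
    simp only [cauchyPDFReal_def]
    ring
  · exact integral_sub_div_one_add_sq_div_sq_mul_cauchyPDFReal_of_ne_zero hμ ha hγ

theorem stmt18 (μ σ ν γ : ℝ) (hσ : 0 < σ) (hν : 0 < ν) (hγ : 0 < γ) :
    ∫ y : ℝ,
        ((y - μ) / (1 + (y - μ) ^ 2 / (ν * σ ^ 2))) *
          (1 / (π * γ) * (1 / (1 + y ^ 2 / γ ^ 2))) =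
      -μ * ν * σ ^ 2 / (μ ^ 2 + (Real.sqrt ν * σ + γ) ^ 2) := by
  have key := integral_sub_div_one_add_sq_div_sq_mul_cauchyPDFReal μ
    (a := √ν * σ) (γ := γ.toNNReal) (by positivity) (by simpa using hγ)
  rw [Real.coe_toNNReal _ hγ.le, mul_pow, sq_sqrt hν.le, ← mul_assoc] at key
  rw [← key]
  congr with y
  rw [cauchyPDFReal_def', NNReal.coe_inv, Real.coe_toNNReal _ hγ.le, sub_zero]
  ring
end
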